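/- arXiv:2006.11500 — 12 statements merged into one kernel-verified Lean document; each statement's English description precedes it below -/
import Mathlib

section
/- Let (X, ‖·‖) be a real Banach space and let T : X → X be an enriched 𝒜-contraction, i.e., there exist b ∈ [0,∞) and f ∈ 𝒜 with ‖b(u−v) + Tu − Tv‖ ≤ f((b+1)‖u−v‖, ‖u−Tu‖, ‖v−Tv‖) for all u, v ∈ X with u ≠ v. Then T has a unique fixed point p ∈ X, and there exists λ ∈ (0,1] such that for every u₀ ∈ X the sequence defined by u_{n+1} = (1−λ)u_n + λT u_n (n ≥ 0) converges to p. -/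
/-!
With `λ = 1/(b+1)` the averaged map `T_λ = (1-λ) I + λ T` satisfies
`T_λ u - T_λ v = λ (b (u-v) + T u - T v)` and `u - T_λ u = λ (u - T u)`, so the positive
homogeneity `(𝒜₃)` turns the enriched condition on `T` into the plain `𝒜`-contraction condition
`d(gu, gv) ≤ f(d(u,v), d(u,gu), d(v,gv))` for `g = T_λ`, whose fixed points are those of `T`.
For such a `g`, `(𝒜₂)` gives `d(gx, g²x) ≤ k d(x, gx)`, so Picard iterates are Cauchy; passing
to the limit with the continuity `(𝒜₁)` gives `c ≤ f(0, c, 0)` for `c = d(p, gp)`, hence `c = 0`.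
-/

/-- Membership in the class `𝒜` of Akram-type comparison functions. -/
def MemA (f : ℝ × ℝ × ℝ → ℝ) : Prop :=
  ContinuousOn f {p : ℝ × ℝ × ℝ | 0 ≤ p.1 ∧ 0 ≤ p.2.1 ∧ 0 ≤ p.2.2} ∧
  (∃ k : ℝ, 0 ≤ k ∧ k < 1 ∧ ∀ r s : ℝ, 0 ≤ r → 0 ≤ s →
    (r ≤ f (s, r, s) ∨ r ≤ f (r, s, s)) → r ≤ k * s) ∧
  (∀ lam : ℝ, 0 < lam → ∀ r s t : ℝ, 0 ≤ r → 0 ≤ s → 0 ≤ t →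
    lam * f (r, s, t) ≤ f (lam * r, lam * s, lam * t))

open Filter Topology Function

def IsAContraction {α : Type*} [MetricSpace α] (f : ℝ × ℝ × ℝ → ℝ) (g : α → α) : Prop :=
  ∀ x y, x ≠ y → dist (g x) (g y) ≤ f (dist x y, dist x (g x), dist y (g y))

def AkramBound (f : ℝ × ℝ × ℝ → ℝ) (k : ℝ) : Prop :=
  ∀ r s : ℝ, 0 ≤ r → 0 ≤ s → (r ≤ f (s, r, s) ∨ r ≤ f (r, s, s)) → r ≤ k * s

namespace IsAContraction

variable {α : Type*} [MetricSpace α] {f : ℝ × ℝ × ℝ → ℝ} {g : α → α} {k : ℝ}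

theorem dist_apply_apply_le (hg : IsAContraction f g) (hk : AkramBound f k) (x : α) :
    dist (g x) (g (g x)) ≤ k * dist x (g x) := by
  by_cases hx : g x = x
  · simp [hx]
  · have h := hg (g x) x hx
    rw [dist_comm (g (g x)), dist_comm (g x) x] at h
    exact hk _ _ dist_nonneg dist_nonneg (Or.inl h)

theorem dist_iterate_succ_le (hg : IsAContraction f g) (hk : AkramBound f k) (hk0 : 0 ≤ k)
    (x : α) (n : ℕ) : dist (g^[n] x) (g^[n + 1] x) ≤ dist x (g x) * k ^ n := by
  induction n with
  | zero => simp
  | succ n ih =>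
    calc dist (g^[n + 1] x) (g^[n + 2] x)
        = dist (g (g^[n] x)) (g (g (g^[n] x))) := by
          rw [iterate_succ_apply', iterate_succ_apply', iterate_succ_apply']
      _ ≤ k * dist (g^[n] x) (g^[n + 1] x) := by
          rw [iterate_succ_apply']
          exact hg.dist_apply_apply_le hk _
      _ ≤ k * (dist x (g x) * k ^ n) := mul_le_mul_of_nonneg_left ih hk0
      _ = dist x (g x) * k ^ (n + 1) := by ring

theorem cauchySeq_iterate (hg : IsAContraction f g) (hk : AkramBound f k) (hk0 : 0 ≤ k)
    (hk1 : k < 1) (x : α) : CauchySeq fun n => g^[n] x :=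
  cauchySeq_of_le_geometric k _ hk1 (hg.dist_iterate_succ_le hk hk0 x)

theorem isFixedPt_of_tendsto_iterate (hg : IsAContraction f g) (hk : AkramBound f k)
    (hf : ContinuousOn f {p : ℝ × ℝ × ℝ | 0 ≤ p.1 ∧ 0 ≤ p.2.1 ∧ 0 ≤ p.2.2}) {x p : α}
    (hp : Tendsto (fun n => g^[n] x) atTop (𝓝 p)) : IsFixedPt g p := by
  by_contra hne
  set c := dist p (g p)
  have hc : 0 < c := dist_pos.2 fun h => hne h.symm
  have hsucc : Tendsto (fun n => g (g^[n] x)) atTop (𝓝 p) := by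
    simpa only [iterate_succ_apply'] using (tendsto_add_atTop_iff_nat 1).2 hp
  have hstep : Tendsto (fun n => dist (g^[n] x) (g (g^[n] x))) atTop (𝓝 0) := by
    simpa using hp.dist hsucc
  have hclose : Tendsto (fun n => dist p (g^[n] x)) atTop (𝓝 0) := by
    simpa using (tendsto_const_nhds (x := p)).dist hp
  have hlhs : Tendsto (fun n => dist (g p) (g (g^[n] x))) atTop (𝓝 c) := by
    have := (tendsto_const_nhds (x := g p)).dist hsucc
    rwa [dist_comm (g p) p] at this
  -- `g^[n] x = p` would make the step length equal to `c`
  have hne' : ∀ᶠ n in atTop, g^[n] x ≠ p := by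
    filter_upwards [hstep.eventually (gt_mem_nhds hc)] with n hn heq
    rw [heq] at hn
    exact hn.false
  have hbound : ∀ᶠ n in atTop,
      dist (g p) (g (g^[n] x)) ≤ f (dist p (g^[n] x), c, dist (g^[n] x) (g (g^[n] x))) := by
    filter_upwards [hne'] with n hn
    exact hg p _ (Ne.symm hn)
  have hrhs : Tendsto (fun n => f (dist p (g^[n] x), c, dist (g^[n] x) (g (g^[n] x)))) atTop
      (𝓝 (f (0, c, 0))) :=
    (hf _ ⟨le_rfl, hc.le, le_rfl⟩).tendsto.comp <| tendsto_nhdsWithin_iff.2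
      ⟨hclose.prodMk_nhds (tendsto_const_nhds.prodMk_nhds hstep),
        Eventually.of_forall fun _ => ⟨dist_nonneg, hc.le, dist_nonneg⟩⟩
  have := hk c 0 hc.le le_rfl (Or.inl (le_of_tendsto_of_tendsto hlhs hrhs hbound))
  linarith

theorem eq_of_isFixedPt (hg : IsAContraction f g) (hk : AkramBound f k) {p q : α}
    (hp : IsFixedPt g p) (hq : IsFixedPt g q) : p = q := by
  by_contra hne
  have h := hg p q hne
  simp only [hp.eq, hq.eq, dist_self] at h
  have := hk _ 0 dist_nonneg le_rfl (Or.inr h)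
  linarith [dist_pos.2 hne]

theorem exists_fixedPt_tendsto_iterate [CompleteSpace α] [Nonempty α]
    (hg : IsAContraction f g) (hk : AkramBound f k) (hk0 : 0 ≤ k) (hk1 : k < 1)
    (hf : ContinuousOn f {p : ℝ × ℝ × ℝ | 0 ≤ p.1 ∧ 0 ≤ p.2.1 ∧ 0 ≤ p.2.2}) :
    ∃ p, IsFixedPt g p ∧ (∀ q, IsFixedPt g q → q = p) ∧
      ∀ x, Tendsto (fun n => g^[n] x) atTop (𝓝 p) := by
  have hlim : ∀ x, ∃ p, IsFixedPt g p ∧ Tendsto (fun n => g^[n] x) atTop (𝓝 p) := fun x =>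
    let ⟨p, hp⟩ := cauchySeq_tendsto_of_complete (hg.cauchySeq_iterate hk hk0 hk1 x)
    ⟨p, hg.isFixedPt_of_tendsto_iterate hk hf hp, hp⟩
  obtain ⟨p, hp, -⟩ := hlim (Classical.arbitrary α)
  refine ⟨p, hp, fun q hq => hg.eq_of_isFixedPt hk hq hp, fun x => ?_⟩
  obtain ⟨q, hq, hx⟩ := hlim x
  rwa [hg.eq_of_isFixedPt hk hq hp] at hx

end IsAContraction

section Krasnoselskii

variable {X : Type*} [NormedAddCommGroup X] [NormedSpace ℝ X]

def krasnoselskiiMap (T : X → X) (lam : ℝ) (x : X) : X :=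
  (1 - lam) • x + lam • T x

def IsEnrichedAContraction (f : ℝ × ℝ × ℝ → ℝ) (b : ℝ) (T : X → X) : Prop :=
  ∀ u v, u ≠ v → ‖b • (u - v) + T u - T v‖ ≤ f ((b + 1) * ‖u - v‖, ‖u - T u‖, ‖v - T v‖)

theorem sub_krasnoselskiiMap (T : X → X) (lam : ℝ) (x : X) :
    x - krasnoselskiiMap T lam x = lam • (x - T x) := by
  unfold krasnoselskiiMap
  module

theorem krasnoselskiiMap_sub_krasnoselskiiMap (T : X → X) {b : ℝ} (hb : b + 1 ≠ 0) (u v : X) :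
    krasnoselskiiMap T (b + 1)⁻¹ u - krasnoselskiiMap T (b + 1)⁻¹ v =
      (b + 1)⁻¹ • (b • (u - v) + T u - T v) := by
  have h : 1 - (b + 1)⁻¹ = (b + 1)⁻¹ * b := by
    field_simp
    ring
  unfold krasnoselskiiMap
  rw [h]
  module

theorem isFixedPt_krasnoselskiiMap_iff {T : X → X} {lam : ℝ} (hlam : lam ≠ 0) {x : X} :
    IsFixedPt (krasnoselskiiMap T lam) x ↔ IsFixedPt T x := by
  rw [IsFixedPt, IsFixedPt, eq_comm, ← sub_eq_zero, sub_krasnoselskiiMap, smul_eq_zero,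
    or_iff_right hlam, sub_eq_zero, eq_comm]

theorem IsEnrichedAContraction.isAContraction_krasnoselskiiMap {f : ℝ × ℝ × ℝ → ℝ} {b : ℝ}
    {T : X → X} (hT : IsEnrichedAContraction f b T) (hb : 0 ≤ b)
    (hf : ∀ lam : ℝ, 0 < lam → ∀ r s t : ℝ, 0 ≤ r → 0 ≤ s → 0 ≤ t →
      lam * f (r, s, t) ≤ f (lam * r, lam * s, lam * t)) :
    IsAContraction f (krasnoselskiiMap T (b + 1)⁻¹) := by
  intro u v huv
  have hb1 : b + 1 ≠ 0 := by positivity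
  have hlam : 0 < (b + 1)⁻¹ := by positivity
  simp only [dist_eq_norm, krasnoselskiiMap_sub_krasnoselskiiMap T hb1, sub_krasnoselskiiMap,
    norm_smul, Real.norm_of_nonneg hlam.le]
  calc (b + 1)⁻¹ * ‖b • (u - v) + T u - T v‖
      ≤ (b + 1)⁻¹ * f ((b + 1) * ‖u - v‖, ‖u - T u‖, ‖v - T v‖) :=
        mul_le_mul_of_nonneg_left (hT u v huv) hlam.le
    _ ≤ f ((b + 1)⁻¹ * ((b + 1) * ‖u - v‖), (b + 1)⁻¹ * ‖u - T u‖, (b + 1)⁻¹ * ‖v - T v‖) :=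
        hf _ hlam _ _ _ (by positivity) (norm_nonneg _) (norm_nonneg _)
    _ = f (‖u - v‖, (b + 1)⁻¹ * ‖u - T u‖, (b + 1)⁻¹ * ‖v - T v‖) := by
        rw [inv_mul_cancel_left₀ hb1]

end Krasnoselskii

/-- An enriched `𝒜`-contraction on a real Banach space has a unique fixed point `p`,
and there is `λ ∈ (0,1]` such that every Krasnoselskii iteration
`u_{n+1} = (1-λ) u_n + λ T u_n` converges to `p`. -/
theorem enriched_A_contraction_fixedPoint
    {X : Type*} [NormedAddCommGroup X] [NormedSpace ℝ X] [CompleteSpace X]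
    (T : X → X) (f : ℝ × ℝ × ℝ → ℝ) (hf : MemA f) (b : ℝ) (hb : 0 ≤ b)
    (hT : ∀ u v : X, u ≠ v →
      ‖b • (u - v) + T u - T v‖ ≤ f ((b + 1) * ‖u - v‖, ‖u - T u‖, ‖v - T v‖)) :
    ∃ p : X, (T p = p ∧ ∀ q : X, T q = q → q = p) ∧
      ∃ lam : ℝ, 0 < lam ∧ lam ≤ 1 ∧
        ∀ u : ℕ → X, (∀ n : ℕ, u (n + 1) = (1 - lam) • u n + lam • T (u n)) →
          Filter.Tendsto u Filter.atTop (nhds p) := by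
  obtain ⟨hcont, ⟨k, hk0, hk1, hk⟩, hhom⟩ := hf
  have hb1 : 0 < b + 1 := by positivity
  set g := krasnoselskiiMap T (b + 1)⁻¹
  have hfix : ∀ q, IsFixedPt g q ↔ T q = q := fun q =>
    isFixedPt_krasnoselskiiMap_iff (inv_ne_zero hb1.ne')
  have hg : IsAContraction f g :=
    IsEnrichedAContraction.isAContraction_krasnoselskiiMap hT hb hhom
  obtain ⟨p, hp, huniq, hconv⟩ := hg.exists_fixedPt_tendsto_iterate hk hk0 hk1 hcont
  refine ⟨p, ⟨(hfix p).1 hp, fun q hq => huniq q ((hfix q).2 hq)⟩, (b + 1)⁻¹, inv_pos.2 hb1,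
    inv_le_one_of_one_le₀ (by linarith), fun u hu => ?_⟩
  have hiter : u = fun n => g^[n] (u 0) := funext fun n => by
    induction n with
    | zero => rfl
    | succ n ih => rw [hu, ih, iterate_succ_apply']; rfl
  exact hiter ▸ hconv (u 0)
end

section
/- Let (X, ‖·‖) be a real Banach space and let T : X → X be an enriched 𝒜′-contraction, i.e., there exist b ∈ [0,∞) and f ∈ 𝒜′ with ‖b(u−v) + Tu − Tv‖ ≤ f((b+1)‖u−v‖, ‖(b+1)(u−v) + v − Tv‖, ‖(b+1)(v−u) + u − Tu‖) for all u, v ∈ X with u ≠ v. Then T has a unique fixed point p ∈ X, and there exists λ ∈ (0,1] such that for every u₀ ∈ X the sequence defined by u_{n+1} = (1−λ)u_n + λT u_n (n ≥ 0) converges to p. -/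
/-!
With `λ = (b + 1)⁻¹`, the averaged map `T_λ = (1 - λ) I + λ T` has the same fixed points as `T`,
and the homogeneity axiom (𝒜′₃) turns the enriched condition into the plain `𝒜′`-contraction
condition `d(T_λ u, T_λ v) ≤ f(d(u, v), d(u, T_λ v), d(v, T_λ u))`; the Krasnoselskii iteration is
the Picard iteration of `T_λ`. For such a map on a complete metric space, (𝒜′₄) and (𝒜′₅) make
consecutive Picard steps shrink by a factor `k < 1`, so every orbit is Cauchy; continuity of `f`
and (𝒜′₅) with `s = 0` show that the limit is fixed, and (𝒜′₆) gives uniqueness.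
-/

/-- Membership in the class `𝒜′` of comparison functions. -/
def MemA' (f : ℝ × ℝ × ℝ → ℝ) : Prop :=
  ContinuousOn f {p : ℝ × ℝ × ℝ | 0 ≤ p.1 ∧ 0 ≤ p.2.1 ∧ 0 ≤ p.2.2} ∧
  (∃ k : ℝ, 0 ≤ k ∧ k < 1 ∧ ∀ r s : ℝ, 0 ≤ r → 0 ≤ s →
    (r ≤ f (r, s, s) ∨ r ≤ f (s, s, r)) → r ≤ k * s) ∧
  (∀ lam : ℝ, 0 < lam → ∀ r s t : ℝ, 0 ≤ r → 0 ≤ s → 0 ≤ t →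
    lam * f (r, s, t) ≤ f (lam * r, lam * s, lam * t)) ∧
  (∀ r s t t₁ : ℝ, 0 ≤ r → 0 ≤ s → 0 ≤ t → 0 ≤ t₁ → t ≤ t₁ →
    f (r, s, t) ≤ f (r, s, t₁)) ∧
  (∃ k : ℝ, 0 ≤ k ∧ k < 1 ∧ ∀ r s : ℝ, 0 ≤ r → 0 ≤ s →
    r ≤ f (s, 0, r + s) → r ≤ k * s) ∧
  (∀ r : ℝ, 0 ≤ r → r ≤ f (r, r, r) → r = 0)

open Filter Topology Function

def A'ContractingWith {α : Type*} [Dist α] (f : ℝ × ℝ × ℝ → ℝ) (S : α → α) : Prop :=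
  ∀ u v, u ≠ v → dist (S u) (S v) ≤ f (dist u v, dist u (S v), dist v (S u))

namespace A'ContractingWith

variable {α : Type*} [MetricSpace α] {f : ℝ × ℝ × ℝ → ℝ} {S : α → α} {k : ℝ}

theorem dist_map_map_le (hS : A'ContractingWith f S)
    (hmono : ∀ r s t t₁ : ℝ, 0 ≤ r → 0 ≤ s → 0 ≤ t → 0 ≤ t₁ → t ≤ t₁ →
      f (r, s, t) ≤ f (r, s, t₁))
    (hk : ∀ r s : ℝ, 0 ≤ r → 0 ≤ s → r ≤ f (s, 0, r + s) → r ≤ k * s) (x : α) :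
    dist (S (S x)) (S x) ≤ k * dist (S x) x := by
  by_cases hx : S x = x
  · simp [hx]
  refine hk _ _ dist_nonneg dist_nonneg ?_
  calc dist (S (S x)) (S x)
      ≤ f (dist (S x) x, dist (S x) (S x), dist x (S (S x))) := hS _ _ hx
    _ = f (dist (S x) x, 0, dist x (S (S x))) := by rw [dist_self]
    _ ≤ f (dist (S x) x, 0, dist (S (S x)) (S x) + dist (S x) x) :=
        hmono _ _ _ _ dist_nonneg le_rfl dist_nonneg (by positivity) <| by
          rw [dist_comm]; exact dist_triangle _ _ _

theorem dist_le_geometric (hS : A'ContractingWith f S)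
    (hmono : ∀ r s t t₁ : ℝ, 0 ≤ r → 0 ≤ s → 0 ≤ t → 0 ≤ t₁ → t ≤ t₁ →
      f (r, s, t) ≤ f (r, s, t₁))
    (hk : ∀ r s : ℝ, 0 ≤ r → 0 ≤ s → r ≤ f (s, 0, r + s) → r ≤ k * s) (hk0 : 0 ≤ k)
    {u : ℕ → α} (hu : ∀ n, u (n + 1) = S (u n)) (n : ℕ) :
    dist (u n) (u (n + 1)) ≤ dist (u 0) (u 1) * k ^ n := by
  induction n with
  | zero => simp
  | succ n ih =>
    calc dist (u (n + 1)) (u (n + 2)) = dist (S (S (u n))) (S (u n)) := by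
          rw [dist_comm, hu (n + 1), hu n]
      _ ≤ k * dist (S (u n)) (u n) := hS.dist_map_map_le hmono hk (u n)
      _ = k * dist (u n) (u (n + 1)) := by rw [hu n, dist_comm]
      _ ≤ k * (dist (u 0) (u 1) * k ^ n) := mul_le_mul_of_nonneg_left ih hk0
      _ = dist (u 0) (u 1) * k ^ (n + 1) := by ring

theorem isFixedPt_of_tendsto (hS : A'ContractingWith f S)
    (hcont : ContinuousOn f {p : ℝ × ℝ × ℝ | 0 ≤ p.1 ∧ 0 ≤ p.2.1 ∧ 0 ≤ p.2.2})
    (hk : ∀ r s : ℝ, 0 ≤ r → 0 ≤ s → r ≤ f (s, 0, r + s) → r ≤ k * s)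
    {u : ℕ → α} (hu : ∀ n, u (n + 1) = S (u n)) {q : α} (hq : Tendsto u atTop (𝓝 q)) :
    IsFixedPt S q := by
  by_contra hne
  have hq1 : Tendsto (fun n => u (n + 1)) atTop (𝓝 q) := hq.comp (tendsto_add_atTop_nat 1)
  -- `u n = q` would force `u (n + 1) = S q`, which stays away from `q`
  have hev : ∀ᶠ n in atTop, u n ≠ q :=
    (hq1.eventually_ne (Ne.symm hne)).mono fun n hn h => hn (by rw [hu, h])
  have hbound : ∀ᶠ n in atTop,
      dist (S q) (u (n + 1)) ≤ f (dist q (u n), dist q (u (n + 1)), dist (u n) (S q)) :=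
    hev.mono fun n hn => by rw [hu n]; exact hS q (u n) (Ne.symm hn)
  have hargs : Tendsto (fun n => (dist q (u n), dist q (u (n + 1)), dist (u n) (S q))) atTop
      (𝓝[{p : ℝ × ℝ × ℝ | 0 ≤ p.1 ∧ 0 ≤ p.2.1 ∧ 0 ≤ p.2.2}] (0, 0, dist q (S q))) :=
    tendsto_nhdsWithin_of_tendsto_nhds_of_eventually_within _ (by
        simpa using ((tendsto_const_nhds (x := q)).dist hq).prodMk_nhds
          (((tendsto_const_nhds (x := q)).dist hq1).prodMk_nhds
            (hq.dist (tendsto_const_nhds (x := S q)))))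
      (Eventually.of_forall fun n => ⟨dist_nonneg, dist_nonneg, dist_nonneg⟩)
  have hle : dist (S q) q ≤ f (0, 0, dist q (S q)) :=
    le_of_tendsto_of_tendsto (tendsto_const_nhds.dist hq1)
      ((hcont _ ⟨le_rfl, le_rfl, dist_nonneg⟩).tendsto.comp hargs) hbound
  have hzero := hk (dist (S q) q) 0 dist_nonneg le_rfl (by simpa [dist_comm] using hle)
  exact hne (dist_le_zero.1 (by simpa using hzero))

theorem eq_of_isFixedPt (hS : A'ContractingWith f S)
    (hdiag : ∀ r : ℝ, 0 ≤ r → r ≤ f (r, r, r) → r = 0)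
    {p q : α} (hp : IsFixedPt S p) (hq : IsFixedPt S q) : p = q := by
  by_contra hne
  have h := hS p q hne
  rw [hp.eq, hq.eq, dist_comm q p] at h
  exact hne (dist_eq_zero.1 (hdiag _ dist_nonneg h))

theorem exists_fixedPt_forall_tendsto [CompleteSpace α] [Nonempty α] (hf : MemA' f)
    (hS : A'ContractingWith f S) :
    ∃ p, IsFixedPt S p ∧ (∀ q, IsFixedPt S q → q = p) ∧
      ∀ u : ℕ → α, (∀ n, u (n + 1) = S (u n)) → Tendsto u atTop (𝓝 p) := by
  obtain ⟨hcont, -, -, hmono, ⟨k, hk0, hk1, hk⟩, hdiag⟩ := hf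
  have hconv (u : ℕ → α) (hu : ∀ n, u (n + 1) = S (u n)) :
      ∃ q, IsFixedPt S q ∧ Tendsto u atTop (𝓝 q) := by
    obtain ⟨q, hq⟩ := cauchySeq_tendsto_of_complete <|
      cauchySeq_of_le_geometric k _ hk1 (hS.dist_le_geometric hmono hk hk0 hu)
    exact ⟨q, hS.isFixedPt_of_tendsto hcont hk hu hq, hq⟩
  obtain ⟨p, hp, -⟩ :=
    hconv (fun n => S^[n] (Classical.arbitrary α)) fun n => iterate_succ_apply' S n _
  have huniq (q : α) (hq : IsFixedPt S q) : q = p := hS.eq_of_isFixedPt hdiag hq hp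
  refine ⟨p, hp, huniq, fun u hu => ?_⟩
  obtain ⟨q, hq, hlim⟩ := hconv u hu
  rwa [huniq q hq] at hlim

end A'ContractingWith

section Enriched

variable {X : Type*} [NormedAddCommGroup X] [NormedSpace ℝ X]

def averagedMap (T : X → X) (lam : ℝ) (x : X) : X := (1 - lam) • x + lam • T x

theorem isFixedPt_averagedMap_iff {T : X → X} {lam : ℝ} (hlam : lam ≠ 0) {x : X} :
    IsFixedPt (averagedMap T lam) x ↔ IsFixedPt T x := by
  have h : averagedMap T lam x = x + lam • (T x - x) := by unfold averagedMap; module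
  simp [IsFixedPt, h, hlam, sub_eq_zero]

theorem smul_averagedMap_inv_add_one (T : X → X) {b : ℝ} (hb : b + 1 ≠ 0) (x : X) :
    (b + 1) • averagedMap T (b + 1)⁻¹ x = b • x + T x := by
  unfold averagedMap
  rw [smul_add, smul_smul, smul_smul, mul_inv_cancel₀ hb, one_smul, mul_sub, mul_inv_cancel₀ hb]
  module

theorem A'ContractingWith.averagedMap_of_enriched {T : X → X} {f : ℝ × ℝ × ℝ → ℝ} {b : ℝ}
    (hb : 0 < b + 1)
    (hhom : ∀ lam : ℝ, 0 < lam → ∀ r s t : ℝ, 0 ≤ r → 0 ≤ s → 0 ≤ t →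
      lam * f (r, s, t) ≤ f (lam * r, lam * s, lam * t))
    (hT : ∀ u v : X, u ≠ v →
      ‖b • (u - v) + T u - T v‖ ≤
        f ((b + 1) * ‖u - v‖, ‖(b + 1) • (u - v) + v - T v‖,
           ‖(b + 1) • (v - u) + u - T u‖)) :
    A'ContractingWith f (averagedMap T (b + 1)⁻¹) := by
  intro u v huv
  set S := averagedMap T (b + 1)⁻¹
  have hS := smul_averagedMap_inv_add_one T hb.ne'
  have hdiff : b • (u - v) + T u - T v = (b + 1) • (S u - S v) := by
    linear_combination (norm := module) hS v - hS u
  have hshift (x y : X) : (b + 1) • (x - y) + y - T y = (b + 1) • (x - S y) := by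
    linear_combination (norm := module) hS y
  have hT' := hT u v huv
  simp only [hdiff, hshift, norm_smul, Real.norm_of_nonneg hb.le] at hT'
  simp only [dist_eq_norm]
  calc ‖S u - S v‖ = (b + 1)⁻¹ * ((b + 1) * ‖S u - S v‖) := by field_simp
    _ ≤ (b + 1)⁻¹ * f ((b + 1) * ‖u - v‖, (b + 1) * ‖u - S v‖, (b + 1) * ‖v - S u‖) :=
        mul_le_mul_of_nonneg_left hT' (by positivity)
    _ ≤ f ((b + 1)⁻¹ * ((b + 1) * ‖u - v‖), (b + 1)⁻¹ * ((b + 1) * ‖u - S v‖),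
          (b + 1)⁻¹ * ((b + 1) * ‖v - S u‖)) :=
        hhom _ (by positivity) _ _ _ (by positivity) (by positivity) (by positivity)
    _ = f (‖u - v‖, ‖u - S v‖, ‖v - S u‖) := by simp only [inv_mul_cancel_left₀ hb.ne']

end Enriched

/-- An enriched `𝒜′`-contraction on a real Banach space has a unique fixed point `p`,
and there is `λ ∈ (0,1]` such that every Krasnoselskii iteration
`u_{n+1} = (1-λ) u_n + λ T u_n` converges to `p`. -/
theorem enriched_A'_contraction_fixedPoint
    {X : Type*} [NormedAddCommGroup X] [NormedSpace ℝ X] [CompleteSpace X]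
    (T : X → X) (f : ℝ × ℝ × ℝ → ℝ) (hf : MemA' f) (b : ℝ) (hb : 0 ≤ b)
    (hT : ∀ u v : X, u ≠ v →
      ‖b • (u - v) + T u - T v‖ ≤
        f ((b + 1) * ‖u - v‖, ‖(b + 1) • (u - v) + v - T v‖,
           ‖(b + 1) • (v - u) + u - T u‖)) :
    ∃ p : X, (T p = p ∧ ∀ q : X, T q = q → q = p) ∧
      ∃ lam : ℝ, 0 < lam ∧ lam ≤ 1 ∧
        ∀ u : ℕ → X, (∀ n : ℕ, u (n + 1) = (1 - lam) • u n + lam • T (u n)) →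
          Filter.Tendsto u Filter.atTop (nhds p) := by
  have hlam : 0 < (b + 1)⁻¹ := by positivity
  obtain ⟨p, hp, huniq, hconv⟩ :=
    (A'ContractingWith.averagedMap_of_enriched (by linarith) hf.2.2.1 hT).exists_fixedPt_forall_tendsto hf
  have hfix (x : X) : IsFixedPt (averagedMap T (b + 1)⁻¹) x ↔ IsFixedPt T x :=
    isFixedPt_averagedMap_iff hlam.ne'
  refine ⟨p, ⟨(hfix p).1 hp, fun q hq => huniq q ((hfix q).2 hq)⟩, (b + 1)⁻¹, hlam,
    inv_le_one_of_one_le₀ (by linarith), fun u hu => hconv u hu⟩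
end

section
/- Let (X, ‖·‖) be a real Banach space, let T : X → X be an enriched 𝒜-contraction with constant b > 0 and function f ∈ 𝒜, and set λ = 1/(b+1) and T_λ u = (1−λ)u + λT u for u ∈ X. Then ‖T_λ u − T_λ v‖ ≤ f(‖u−v‖, ‖u − T_λ u‖, ‖v − T_λ v‖) for all u, v ∈ X with u ≠ v. -/
/-- If `T` is an enriched `𝒜`-contraction with constant `b > 0` and `λ = 1/(b+1)`,
then the averaged operator `T_λ u = (1-λ) u + λ T u` satisfies
`‖T_λ u − T_λ v‖ ≤ f(‖u−v‖, ‖u − T_λ u‖, ‖v − T_λ v‖)` for all `u ≠ v`. -/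
theorem enriched_A_contraction_averaged
    {X : Type*} [NormedAddCommGroup X] [NormedSpace ℝ X] [CompleteSpace X]
    (T : X → X) (f : ℝ × ℝ × ℝ → ℝ) (hf : MemA f) (b : ℝ) (hb : 0 < b)
    (hT : ∀ u v : X, u ≠ v →
      ‖b • (u - v) + T u - T v‖ ≤ f ((b + 1) * ‖u - v‖, ‖u - T u‖, ‖v - T v‖))
    (lam : ℝ) (hlam : lam = 1 / (b + 1))
    (Tl : X → X) (hTl : ∀ u : X, Tl u = (1 - lam) • u + lam • T u) :
    ∀ u v : X, u ≠ v →
      ‖Tl u - Tl v‖ ≤ f (‖u - v‖, ‖u - Tl u‖, ‖v - Tl v‖) := by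
  intro u v huv
  have hb1 : (0:ℝ) < b + 1 := by linarith
  have hlpos : 0 < lam := by rw [hlam]; positivity
  have hl1 : lam * (b + 1) = 1 := by
    rw [hlam]; field_simp
  have hlb : 1 - lam = lam * b := by nlinarith
  have key : Tl u - Tl v = lam • (b • (u - v) + T u - T v) := by
    rw [hTl, hTl, hlb]
    simp only [smul_add, smul_sub, smul_smul]
    abel
  have hfix : ∀ w : X, w - Tl w = lam • (w - T w) := by
    intro w
    rw [hTl, smul_sub]
    rw [sub_smul, one_smul]
    abel
  have h3 := hf.2.2 lam hlpos ((b + 1) * ‖u - v‖) ‖u - T u‖ ‖v - T v‖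
    (by positivity) (norm_nonneg _) (norm_nonneg _)
  have hnorm : ‖Tl u - Tl v‖ = lam * ‖b • (u - v) + T u - T v‖ := by
    rw [key, norm_smul, Real.norm_eq_abs, abs_of_pos hlpos]
  calc ‖Tl u - Tl v‖ = lam * ‖b • (u - v) + T u - T v‖ := hnorm
    _ ≤ lam * f ((b + 1) * ‖u - v‖, ‖u - T u‖, ‖v - T v‖) := by
        exact mul_le_mul_of_nonneg_left (hT u v huv) hlpos.le
    _ ≤ f (lam * ((b + 1) * ‖u - v‖), lam * ‖u - T u‖, lam * ‖v - T v‖) := h3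
    _ = f (‖u - v‖, ‖u - Tl u‖, ‖v - Tl v‖) := by
        rw [hfix u, hfix v, norm_smul, norm_smul, Real.norm_eq_abs,
          abs_of_pos hlpos, ← mul_assoc, hl1, one_mul]
end

section
/- Let (X, ‖·‖) be a real Banach space, let T : X → X be an enriched 𝒜′-contraction with constant b > 0 and function f ∈ 𝒜′, and set λ = 1/(b+1) and T_λ u = (1−λ)u + λT u for u ∈ X. Then ‖T_λ u − T_λ v‖ ≤ f(‖u−v‖, ‖u − T_λ v‖, ‖v − T_λ u‖) for all u, v ∈ X with u ≠ v. -/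
/-- If `T` is an enriched `𝒜′`-contraction with constant `b > 0` and `λ = 1/(b+1)`,
then the averaged operator `T_λ u = (1-λ) u + λ T u` satisfies
`‖T_λ u − T_λ v‖ ≤ f(‖u−v‖, ‖u − T_λ v‖, ‖v − T_λ u‖)` for all `u ≠ v`. -/
theorem enriched_A'_contraction_averaged
    {X : Type*} [NormedAddCommGroup X] [NormedSpace ℝ X] [CompleteSpace X]
    (T : X → X) (f : ℝ × ℝ × ℝ → ℝ) (hf : MemA' f) (b : ℝ) (hb : 0 < b)
    (hT : ∀ u v : X, u ≠ v →
      ‖b • (u - v) + T u - T v‖ ≤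
        f ((b + 1) * ‖u - v‖, ‖(b + 1) • (u - v) + v - T v‖,
           ‖(b + 1) • (v - u) + u - T u‖))
    (lam : ℝ) (hlam : lam = 1 / (b + 1))
    (Tl : X → X) (hTl : ∀ u : X, Tl u = (1 - lam) • u + lam • T u) :
    ∀ u v : X, u ≠ v →
      ‖Tl u - Tl v‖ ≤ f (‖u - v‖, ‖u - Tl v‖, ‖v - Tl u‖) := by
  intro u v huv
  have hb1 : (0:ℝ) < b + 1 := by linarith
  have hlp : 0 < lam := by rw [hlam]; positivity
  have h1 : lam * (b + 1) = 1 := by rw [hlam]; field_simp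
  have e1 : Tl u - Tl v = lam • (b • (u - v) + T u - T v) := by
    rw [hTl, hTl]
    match_scalars <;> nlinarith [h1]
  have e2 : u - Tl v = lam • ((b + 1) • (u - v) + v - T v) := by
    rw [hTl]
    match_scalars <;> nlinarith [h1]
  have e3 : v - Tl u = lam • ((b + 1) • (v - u) + u - T u) := by
    rw [hTl]
    match_scalars <;> nlinarith [h1]
  have n1 : ‖Tl u - Tl v‖ = lam * ‖b • (u - v) + T u - T v‖ := by
    rw [e1, norm_smul, Real.norm_eq_abs, abs_of_pos hlp]
  have n2 : ‖u - Tl v‖ = lam * ‖(b + 1) • (u - v) + v - T v‖ := by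
    rw [e2, norm_smul, Real.norm_eq_abs, abs_of_pos hlp]
  have n3 : ‖v - Tl u‖ = lam * ‖(b + 1) • (v - u) + u - T u‖ := by
    rw [e3, norm_smul, Real.norm_eq_abs, abs_of_pos hlp]
  have key := hT u v huv
  have step1 : ‖Tl u - Tl v‖ ≤ lam * f ((b + 1) * ‖u - v‖,
      ‖(b + 1) • (u - v) + v - T v‖, ‖(b + 1) • (v - u) + u - T u‖) := by
    rw [n1]; exact mul_le_mul_of_nonneg_left key hlp.le
  have step2 := hf.2.2.1 lam hlp ((b + 1) * ‖u - v‖)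
      ‖(b + 1) • (u - v) + v - T v‖ ‖(b + 1) • (v - u) + u - T u‖
      (by positivity) (norm_nonneg _) (norm_nonneg _)
  calc ‖Tl u - Tl v‖ ≤ _ := step1
    _ ≤ _ := step2
    _ = f (‖u - v‖, ‖u - Tl v‖, ‖v - Tl u‖) := by
        rw [n2, n3, ← mul_assoc, h1, one_mul]
end

section
/- Let (X, ‖·‖) be a real Banach space and let T : X → X be an enriched 𝒜′-contraction. Then the fixed point problem for T is well-posed: T has a unique fixed point p ∈ X, and for every sequence (u_n) in X with ‖u_n − T u_n‖ → 0 as n → ∞, one has ‖u_n − p‖ → 0 as n → ∞. -/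
/-- The fixed point problem of an enriched `𝒜′`-contraction on a real Banach space
is well-posed. -/
theorem enriched_A'_contraction_wellPosed
    {X : Type*} [NormedAddCommGroup X] [NormedSpace ℝ X] [CompleteSpace X]
    (T : X → X) (f : ℝ × ℝ × ℝ → ℝ) (hf : MemA' f) (b : ℝ) (hb : 0 ≤ b)
    (hT : ∀ u v : X, u ≠ v →
      ‖b • (u - v) + T u - T v‖ ≤
        f ((b + 1) * ‖u - v‖, ‖(b + 1) • (u - v) + v - T v‖,
           ‖(b + 1) • (v - u) + u - T u‖)) :
    ∃ p : X, (T p = p ∧ ∀ q : X, T q = q → q = p) ∧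
      ∀ u : ℕ → X,
        Filter.Tendsto (fun n => ‖u n - T (u n)‖) Filter.atTop (nhds 0) →
        Filter.Tendsto (fun n => ‖u n - p‖) Filter.atTop (nhds 0) := by
  classical
  obtain ⟨hcont, ⟨k2, hk20, hk21, hA2⟩, hA3, hA4, ⟨k5, hk50, hk51, hA5⟩, hA6⟩ := hf
  have hc0 : (0:ℝ) < b + 1 := by linarith
  set S : X → X := fun u => (b + 1)⁻¹ • (b • u + T u) with hSdef
  have hcS : ∀ u, (b + 1) • S u = b • u + T u := by
    intro u
    simp only [hSdef, smul_smul, mul_inv_cancel₀ hc0.ne', one_smul]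
  have hnorm : ∀ x : X, ‖(b + 1) • x‖ = (b + 1) * ‖x‖ := by
    intro x
    rw [norm_smul, Real.norm_eq_abs, abs_of_pos hc0]
  -- the averaged map `S` is a (metric) 𝒜′-contraction
  have key : ∀ u v : X, u ≠ v → ‖S u - S v‖ ≤ f (‖u - v‖, ‖u - S v‖, ‖v - S u‖) := by
    intro u v huv
    have e1 : b • (u - v) + T u - T v = (b + 1) • (S u - S v) := by
      rw [smul_sub (b+1), hcS u, hcS v]; module
    have e2 : (b + 1) • (u - v) + v - T v = (b + 1) • (u - S v) := by
      rw [smul_sub (b+1) u (S v), hcS v]; module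
    have e3 : (b + 1) • (v - u) + u - T u = (b + 1) • (v - S u) := by
      rw [smul_sub (b+1) v (S u), hcS u]; module
    have h1 := hT u v huv
    rw [e1, e2, e3, hnorm, hnorm, hnorm] at h1
    have h2 := hA3 (b + 1)⁻¹ (by positivity) ((b + 1) * ‖u - v‖) ((b + 1) * ‖u - S v‖)
      ((b + 1) * ‖v - S u‖) (by positivity) (by positivity) (by positivity)
    rw [inv_mul_cancel_left₀ hc0.ne', inv_mul_cancel_left₀ hc0.ne',
      inv_mul_cancel_left₀ hc0.ne'] at h2
    calc ‖S u - S v‖ = (b + 1)⁻¹ * ((b + 1) * ‖S u - S v‖) := by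
          rw [inv_mul_cancel_left₀ hc0.ne']
      _ ≤ (b + 1)⁻¹ * f ((b + 1) * ‖u - v‖, (b + 1) * ‖u - S v‖, (b + 1) * ‖v - S u‖) :=
          mul_le_mul_of_nonneg_left h1 (by positivity)
      _ ≤ f (‖u - v‖, ‖u - S v‖, ‖v - S u‖) := h2
  -- fixed points of `S` and `T` coincide
  have hfix : ∀ x : X, S x = x ↔ T x = x := by
    intro x
    constructor
    · intro h
      have hx := hcS x
      rw [h] at hx
      calc T x = (b • x + T x) - b • x := by abel
        _ = (b + 1) • x - b • x := by rw [hx]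
        _ = x := by module
    · intro h
      rw [hSdef]
      simp only
      rw [h, show b • x + x = (b + 1) • x by module, smul_smul,
        inv_mul_cancel₀ hc0.ne', one_smul]
  -- Picard iteration for S
  set x : ℕ → X := fun n => S^[n] 0 with hx
  have hxs : ∀ n, x (n + 1) = S (x n) := by
    intro n
    simp only [hx]
    exact Function.iterate_succ_apply' S n 0
  have hstep : ∀ n, ‖x (n + 1) - x (n + 2)‖ ≤ k5 * ‖x n - x (n + 1)‖ := by
    intro n
    have hx2 : x (n + 2) = S (x (n + 1)) := hxs (n + 1)
    by_cases h : x (n + 1) = x n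
    · have h2 : x (n + 2) = x (n + 1) := by rw [hx2, h, ← hxs n]; exact h
      rw [h2, sub_self, norm_zero]
      positivity
    · have h1 := key (x (n + 1)) (x n) h
      rw [← hxs n, ← hx2, sub_self, norm_zero, norm_sub_rev (x (n + 2)) (x (n + 1))] at h1
      have h2 : ‖x n - x (n + 2)‖ ≤ ‖x (n + 1) - x (n + 2)‖ + ‖x (n + 1) - x n‖ := by
        have h3 := norm_sub_le_norm_sub_add_norm_sub (x n) (x (n + 1)) (x (n + 2))
        rw [norm_sub_rev (x n) (x (n + 1))] at h3
        linarith
      have h3 := hA4 ‖x (n + 1) - x n‖ 0 ‖x n - x (n + 2)‖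
        (‖x (n + 1) - x (n + 2)‖ + ‖x (n + 1) - x n‖) (norm_nonneg _) le_rfl
        (norm_nonneg _) (by positivity) h2
      have h4 : ‖x (n + 1) - x (n + 2)‖ ≤
          f (‖x (n + 1) - x n‖, 0, ‖x (n + 1) - x (n + 2)‖ + ‖x (n + 1) - x n‖) :=
        le_trans h1 h3
      have h5 := hA5 ‖x (n + 1) - x (n + 2)‖ ‖x (n + 1) - x n‖ (norm_nonneg _)
        (norm_nonneg _) h4
      rw [norm_sub_rev (x n) (x (n + 1))]
      exact h5
  have hgeo : ∀ n, ‖x n - x (n + 1)‖ ≤ ‖x 0 - x 1‖ * k5 ^ n := by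
    intro n
    induction n with
    | zero => simp
    | succ m ih =>
      calc ‖x (m + 1) - x (m + 2)‖ ≤ k5 * ‖x m - x (m + 1)‖ := hstep m
        _ ≤ k5 * (‖x 0 - x 1‖ * k5 ^ m) := mul_le_mul_of_nonneg_left ih hk50
        _ = ‖x 0 - x 1‖ * k5 ^ (m + 1) := by ring
  have hcauchy : CauchySeq x := by
    apply cauchySeq_of_le_geometric k5 ‖x 0 - x 1‖ hk51
    intro n
    rw [dist_eq_norm]
    exact hgeo n
  obtain ⟨p, hp⟩ := cauchySeq_tendsto_of_complete hcauchy
  -- `p` is a fixed point of `S`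
  have hSp : S p = p := by
    by_cases hev : ∀ᶠ n in Filter.atTop, x n ≠ p
    · obtain ⟨N, hN⟩ := Filter.eventually_atTop.mp hev
      have ha0 : Filter.Tendsto (fun n => ‖p - x n‖) Filter.atTop (nhds ‖p - p‖) :=
        (Filter.Tendsto.sub (tendsto_const_nhds (x := p)) hp).norm
      have ha : Filter.Tendsto (fun n => ‖p - x n‖) Filter.atTop (nhds 0) := by
        simpa using ha0
      have hb' : Filter.Tendsto (fun n => ‖p - x (n + 1)‖) Filter.atTop (nhds 0) :=
        ha.comp (Filter.tendsto_add_atTop_nat 1)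
      have hcn : Filter.Tendsto (fun n => ‖x n - S p‖) Filter.atTop (nhds ‖p - S p‖) :=
        (hp.sub tendsto_const_nhds).norm
      have hg : Filter.Tendsto (fun n => ((‖p - x n‖, ‖p - x (n + 1)‖, ‖x n - S p‖) : ℝ × ℝ × ℝ))
          Filter.atTop (nhds (0, 0, ‖p - S p‖)) :=
        ha.prodMk_nhds (hb'.prodMk_nhds hcn)
      have hgQ : Filter.Tendsto (fun n => ((‖p - x n‖, ‖p - x (n + 1)‖, ‖x n - S p‖) : ℝ × ℝ × ℝ))
          Filter.atTop (nhdsWithin (0, 0, ‖p - S p‖)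
            {q : ℝ × ℝ × ℝ | 0 ≤ q.1 ∧ 0 ≤ q.2.1 ∧ 0 ≤ q.2.2}) :=
        tendsto_nhdsWithin_of_tendsto_nhds_of_eventually_within _ hg
          (Filter.Eventually.of_forall fun n => ⟨norm_nonneg _, norm_nonneg _, norm_nonneg _⟩)
      have hfc : Filter.Tendsto (fun n => f (‖p - x n‖, ‖p - x (n + 1)‖, ‖x n - S p‖))
          Filter.atTop (nhds (f (0, 0, ‖p - S p‖))) :=
        Filter.Tendsto.comp (hcont _ ⟨le_rfl, le_rfl, norm_nonneg _⟩) hgQ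
      have hineq : ∀ n ≥ N, ‖p - S p‖ ≤
          f (‖p - x n‖, ‖p - x (n + 1)‖, ‖x n - S p‖) + ‖p - x (n + 1)‖ := by
        intro n hn
        have hne : p ≠ x n := fun h => hN n hn h.symm
        have h1 := key p (x n) hne
        rw [← hxs n] at h1
        have h2 := norm_sub_le_norm_sub_add_norm_sub p (x (n + 1)) (S p)
        rw [norm_sub_rev (x (n + 1)) (S p)] at h2
        linarith
      have hlim : Filter.Tendsto
          (fun n => f (‖p - x n‖, ‖p - x (n + 1)‖, ‖x n - S p‖) + ‖p - x (n + 1)‖)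
          Filter.atTop (nhds (f (0, 0, ‖p - S p‖) + 0)) := hfc.add hb'
      have hle : ‖p - S p‖ ≤ f (0, 0, ‖p - S p‖) + 0 :=
        ge_of_tendsto hlim (Filter.eventually_atTop.mpr ⟨N, hineq⟩)
      have h0 : ‖p - S p‖ ≤ k5 * 0 :=
        hA5 ‖p - S p‖ 0 (norm_nonneg _) le_rfl (by simpa using hle)
      have h1 : ‖p - S p‖ = 0 := le_antisymm (by simpa using h0) (norm_nonneg _)
      exact (sub_eq_zero.mp (norm_eq_zero.mp h1)).symm
    · rw [Filter.not_eventually] at hev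
      simp only [not_not] at hev
      obtain ⟨φ, hφ, hφp⟩ := Filter.extraction_of_frequently_atTop hev
      have h1 : ∀ n, x (φ n + 1) = S p := fun n => by rw [hxs, hφp]
      have h2 : Filter.Tendsto (fun n => x (φ n + 1)) Filter.atTop (nhds p) :=
        hp.comp (Filter.tendsto_atTop_mono (fun n => Nat.le_succ (φ n)) hφ.tendsto_atTop)
      have h3 : Filter.Tendsto (fun _ : ℕ => S p) Filter.atTop (nhds p) := h2.congr h1
      exact tendsto_const_nhds_iff.mp h3
  have hTp : T p = p := (hfix p).mp hSp
  refine ⟨p, ⟨hTp, ?_⟩, ?_⟩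
  · -- uniqueness
    intro q hq
    by_contra hne
    have hSq : S q = q := (hfix q).mpr hq
    have h1 := key q p hne
    rw [hSq, hSp, norm_sub_rev p q] at h1
    have h2 := hA6 ‖q - p‖ (norm_nonneg _) h1
    exact hne (sub_eq_zero.mp (norm_eq_zero.mp h2))
  · -- well-posedness
    intro w hw
    have hwS : ∀ n, ‖w n - S (w n)‖ = (b + 1)⁻¹ * ‖w n - T (w n)‖ := by
      intro n
      have e : (b + 1) • (w n - S (w n)) = w n - T (w n) := by
        rw [smul_sub (b+1), hcS (w n)]; module
      rw [← e, hnorm, inv_mul_cancel_left₀ hc0.ne']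
    have hbound : ∀ n, ‖w n - p‖ ≤ ‖w n - S (w n)‖ / (1 - k2) := by
      intro n
      rcases eq_or_ne (w n) p with h | h
      · rw [h, sub_self, norm_zero]
        exact div_nonneg (norm_nonneg _) (by linarith)
      · have h1 := key (w n) p h
        rw [hSp, norm_sub_rev (S (w n)) p] at h1
        have h2 := hA2 ‖p - S (w n)‖ ‖w n - p‖ (norm_nonneg _) (norm_nonneg _) (Or.inr h1)
        have h3 := norm_sub_le_norm_sub_add_norm_sub (w n) (S (w n)) p
        rw [norm_sub_rev (S (w n)) p] at h3
        rw [le_div_iff₀ (by linarith : (0:ℝ) < 1 - k2)]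
        nlinarith
    have hε : Filter.Tendsto (fun n => ‖w n - S (w n)‖ / (1 - k2)) Filter.atTop (nhds 0) := by
      have h1 : Filter.Tendsto (fun n => (b + 1)⁻¹ * ‖w n - T (w n)‖) Filter.atTop
          (nhds ((b + 1)⁻¹ * 0)) := hw.const_mul _
      rw [mul_zero] at h1
      have h2 : Filter.Tendsto (fun n => ‖w n - S (w n)‖) Filter.atTop (nhds 0) :=
        h1.congr fun n => (hwS n).symm
      simpa using h2.div_const (1 - k2)
    exact squeeze_zero (fun n => norm_nonneg _) hbound hε
end

section
/- Let (X, ‖·‖) be a real Banach space and let T : X → X be an enriched 𝒜′-contraction. Then the fixed point problem for T has the limit shadowing property: for every sequence (u_n) in X with ‖u_n − T u_n‖ → 0 as n → ∞, there exists p ∈ X such that ‖Tⁿp − u_n‖ → 0 as n → ∞. -/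
/-- The fixed point problem of an enriched `𝒜′`-contraction on a real Banach space
has the limit shadowing property. -/
theorem enriched_A'_contraction_limitShadowing
    {X : Type*} [NormedAddCommGroup X] [NormedSpace ℝ X] [CompleteSpace X]
    (T : X → X) (f : ℝ × ℝ × ℝ → ℝ) (hf : MemA' f) (b : ℝ) (hb : 0 ≤ b)
    (hT : ∀ u v : X, u ≠ v →
      ‖b • (u - v) + T u - T v‖ ≤
        f ((b + 1) * ‖u - v‖, ‖(b + 1) • (u - v) + v - T v‖,
           ‖(b + 1) • (v - u) + u - T u‖)) :
    ∀ u : ℕ → X,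
      Filter.Tendsto (fun n => ‖u n - T (u n)‖) Filter.atTop (nhds 0) →
      ∃ p : X, Filter.Tendsto (fun n => ‖T^[n] p - u n‖) Filter.atTop (nhds 0) := by
  obtain ⟨hcont, ⟨k₂, hk₂0, hk₂1, hA2⟩, hA3, hA4, ⟨k₅, hk₅0, hk₅1, hA5⟩, hA6⟩ := hf
  intro u hu
  have hc0 : (0:ℝ) < b + 1 := by linarith
  have hcne : (b + 1 : ℝ) ≠ 0 := ne_of_gt hc0
  set S : X → X := fun x => (b + 1)⁻¹ • (b • x + T x) with hSdef
  have hcS : ∀ w : X, (b + 1) • S w = b • w + T w := fun w => smul_inv_smul₀ hcne _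
  -- `S` is an ordinary 𝒜′-contraction
  have hScontr : ∀ v w : X, v ≠ w →
      ‖S v - S w‖ ≤ f (‖v - w‖, ‖v - S w‖, ‖w - S v‖) := by
    intro v w hvw
    have e1 : (b+1) • (S v - S w) = b • (v - w) + T v - T w := by
      rw [smul_sub, hcS, hcS]; module
    have e2 : (b+1) • (v - S w) = (b+1) • (v - w) + w - T w := by
      rw [smul_sub, hcS]; module
    have e3 : (b+1) • (w - S v) = (b+1) • (w - v) + v - T v := by
      rw [smul_sub, hcS]; module
    have h := hT v w hvw
    rw [← e1, ← e2, ← e3] at h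
    have hn : ∀ z : X, ‖(b+1) • z‖ = (b+1) * ‖z‖ := by
      intro z; rw [norm_smul, Real.norm_of_nonneg hc0.le]
    rw [hn, hn, hn] at h
    have h3 := hA3 (b+1)⁻¹ (inv_pos.mpr hc0)
      ((b+1) * ‖v - w‖) ((b+1) * ‖v - S w‖) ((b+1) * ‖w - S v‖)
      (mul_nonneg hc0.le (norm_nonneg _)) (mul_nonneg hc0.le (norm_nonneg _))
      (mul_nonneg hc0.le (norm_nonneg _))
    rw [inv_mul_cancel_left₀ hcne, inv_mul_cancel_left₀ hcne,
      inv_mul_cancel_left₀ hcne] at h3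
    calc ‖S v - S w‖ = (b+1)⁻¹ * ((b+1) * ‖S v - S w‖) :=
          (inv_mul_cancel_left₀ hcne _).symm
      _ ≤ (b+1)⁻¹ * f ((b+1) * ‖v - w‖, (b+1) * ‖v - S w‖, (b+1) * ‖w - S v‖) :=
          mul_le_mul_of_nonneg_left h (inv_nonneg.mpr hc0.le)
      _ ≤ f (‖v - w‖, ‖v - S w‖, ‖w - S v‖) := h3
  -- Picard iterates of `S`
  set x : ℕ → X := fun n => S^[n] 0 with hxdef
  have hxsucc : ∀ n, x (n+1) = S (x n) := fun n => Function.iterate_succ_apply' S n 0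
  have hstep : ∀ n, ‖x (n+1) - x (n+2)‖ ≤ k₅ * ‖x n - x (n+1)‖ := by
    intro n
    by_cases h : x n = x (n+1)
    · have h2 : x (n+2) = x (n+1) := by
        rw [show n+2 = (n+1)+1 from rfl, hxsucc (n+1), ← h]
        exact (hxsucc n).symm.trans h.symm
      rw [h2, sub_self, norm_zero]
      exact mul_nonneg hk₅0 (norm_nonneg _)
    · have hcon := hScontr (x (n+1)) (x n) (fun e => h e.symm)
      rw [← hxsucc (n+1), ← hxsucc n] at hcon
      simp only [sub_self, norm_zero] at hcon
      have htri : ‖x n - x (n+2)‖ ≤ ‖x (n+2) - x (n+1)‖ + ‖x (n+1) - x n‖ := by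
        have h5 := norm_add_le (x n - x (n+1)) (x (n+1) - x (n+2))
        rw [sub_add_sub_cancel] at h5
        calc ‖x n - x (n+2)‖ ≤ ‖x n - x (n+1)‖ + ‖x (n+1) - x (n+2)‖ := h5
          _ = ‖x (n+2) - x (n+1)‖ + ‖x (n+1) - x n‖ := by
              rw [norm_sub_rev (x n) (x (n+1)), norm_sub_rev (x (n+1)) (x (n+2))]
              ring
      have h4 := hA4 (‖x (n+1) - x n‖) 0 (‖x n - x (n+2)‖)
        (‖x (n+2) - x (n+1)‖ + ‖x (n+1) - x n‖) (norm_nonneg _) le_rfl (norm_nonneg _)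
        (by positivity) htri
      have key := hA5 (‖x (n+2) - x (n+1)‖) (‖x (n+1) - x n‖) (norm_nonneg _)
        (norm_nonneg _) (le_trans hcon h4)
      rw [norm_sub_rev (x (n+1)) (x (n+2)), norm_sub_rev (x n) (x (n+1))]
      exact key
  have hgeo : ∀ n, ‖x n - x (n+1)‖ ≤ ‖x 0 - x 1‖ * k₅ ^ n := by
    intro n
    induction n with
    | zero => simp
    | succ n ih =>
      calc ‖x (n+1) - x (n+1+1)‖ ≤ k₅ * ‖x n - x (n+1)‖ := hstep n
        _ ≤ k₅ * (‖x 0 - x 1‖ * k₅ ^ n) := mul_le_mul_of_nonneg_left ih hk₅0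
        _ = ‖x 0 - x 1‖ * k₅ ^ (n+1) := by ring
  have hcauchy : CauchySeq x :=
    cauchySeq_of_le_geometric k₅ (‖x 0 - x 1‖) hk₅1
      (fun n => by rw [dist_eq_norm]; exact hgeo n)
  obtain ⟨p, hp⟩ := cauchySeq_tendsto_of_complete hcauchy
  -- p is a fixed point of S
  have hSp : S p = p := by
    by_cases hfreq : ∃ᶠ n in Filter.atTop, x n = p
    · obtain ⟨φ, hφmono, hφ⟩ := Filter.extraction_of_frequently_atTop hfreq
      have hφt : Filter.Tendsto (fun k => φ k + 1) Filter.atTop Filter.atTop :=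
        Filter.tendsto_atTop_mono (fun k => (hφmono.id_le k).trans (Nat.le_succ _))
          Filter.tendsto_id
      have h1 : Filter.Tendsto (fun k => x (φ k + 1)) Filter.atTop (nhds p) :=
        hp.comp hφt
      have h2 : (fun k => x (φ k + 1)) = fun _ => S p := by
        funext k; rw [hxsucc (φ k), hφ k]
      rw [h2] at h1
      exact tendsto_nhds_unique tendsto_const_nhds h1
    · have hev : ∀ᶠ n in Filter.atTop, x n ≠ p := Filter.not_frequently.mp hfreq
      have hx1 : Filter.Tendsto (fun n => x (n+1)) Filter.atTop (nhds p) :=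
        hp.comp (Filter.tendsto_add_atTop_nat 1)
      have hineq : ∀ᶠ n in Filter.atTop,
          ‖S p - x (n+1)‖ ≤ f (‖p - x n‖, ‖p - x (n+1)‖, ‖x n - S p‖) := by
        filter_upwards [hev] with n hn
        have hc := hScontr p (x n) (fun e => hn e.symm)
        rw [← hxsucc n] at hc
        exact hc
      have hL : Filter.Tendsto (fun n => ‖S p - x (n+1)‖) Filter.atTop
          (nhds ‖p - S p‖) := by
        have := (Filter.Tendsto.sub (tendsto_const_nhds (x := S p)) hx1).norm
        rwa [norm_sub_rev (S p) p] at this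
      have ha : Filter.Tendsto (fun n => ‖p - x n‖) Filter.atTop (nhds 0) := by
        have := (Filter.Tendsto.sub (tendsto_const_nhds (x := p)) hp).norm
        simpa using this
      have hb' : Filter.Tendsto (fun n => ‖p - x (n+1)‖) Filter.atTop (nhds 0) := by
        have := (Filter.Tendsto.sub (tendsto_const_nhds (x := p)) hx1).norm
        simpa using this
      have hc' : Filter.Tendsto (fun n => ‖x n - S p‖) Filter.atTop
          (nhds ‖p - S p‖) := (hp.sub tendsto_const_nhds).norm
      have htrip : Filter.Tendsto
          (fun n => ((‖p - x n‖, ‖p - x (n+1)‖, ‖x n - S p‖) : ℝ × ℝ × ℝ))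
          Filter.atTop (nhds (0, 0, ‖p - S p‖)) :=
        ha.prodMk_nhds (hb'.prodMk_nhds hc')
      have hptmem : ((0 : ℝ), (0:ℝ), ‖p - S p‖) ∈
          {q : ℝ × ℝ × ℝ | 0 ≤ q.1 ∧ 0 ≤ q.2.1 ∧ 0 ≤ q.2.2} :=
        ⟨le_rfl, le_rfl, norm_nonneg _⟩
      have htrip' : Filter.Tendsto
          (fun n => ((‖p - x n‖, ‖p - x (n+1)‖, ‖x n - S p‖) : ℝ × ℝ × ℝ))
          Filter.atTop (nhdsWithin (0, 0, ‖p - S p‖)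
            {q : ℝ × ℝ × ℝ | 0 ≤ q.1 ∧ 0 ≤ q.2.1 ∧ 0 ≤ q.2.2}) :=
        tendsto_nhdsWithin_iff.mpr ⟨htrip, Filter.Eventually.of_forall
          (fun n => ⟨norm_nonneg _, norm_nonneg _, norm_nonneg _⟩)⟩
      have hR : Filter.Tendsto
          (fun n => f (‖p - x n‖, ‖p - x (n+1)‖, ‖x n - S p‖)) Filter.atTop
          (nhds (f (0, 0, ‖p - S p‖))) :=
        (hcont _ hptmem).tendsto.comp htrip'
      have hr : ‖p - S p‖ ≤ f (0, 0, ‖p - S p‖) :=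
        le_of_tendsto_of_tendsto hL hR hineq
      have h0 : ‖p - S p‖ ≤ k₅ * 0 :=
        hA5 (‖p - S p‖) 0 (norm_nonneg _) le_rfl (by simpa using hr)
      have h0' : ‖p - S p‖ = 0 := le_antisymm (by simpa using h0) (norm_nonneg _)
      have := sub_eq_zero.mp (norm_eq_zero.mp h0')
      exact this.symm
  -- p is a fixed point of T
  have hTp : T p = p := by
    have h1 := hcS p
    rw [hSp] at h1
    have h2 : (b+1) • p = b • p + p := by module
    rw [h2] at h1
    exact (add_left_cancel h1).symm
  refine ⟨p, ?_⟩
  have hfix : ∀ n, T^[n] p = p := fun n => Function.iterate_fixed hTp n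
  -- the defect w.r.t. S also tends to 0
  have he : ∀ w : X, ‖w - S w‖ = (b+1)⁻¹ * ‖w - T w‖ := by
    intro w
    have h1 : (b+1) • (w - S w) = w - T w := by rw [smul_sub, hcS]; module
    have h2 := congrArg norm h1
    rw [norm_smul, Real.norm_of_nonneg hc0.le] at h2
    rw [← h2, inv_mul_cancel_left₀ hcne]
  have heps : Filter.Tendsto (fun n => ‖u n - S (u n)‖) Filter.atTop (nhds 0) := by
    simp only [he]
    simpa using hu.const_mul ((b+1)⁻¹)
  -- shadowing estimate
  have hbound : ∀ n, ‖u n - p‖ ≤ (1 - k₂)⁻¹ * ‖u n - S (u n)‖ := by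
    intro n
    have hk2lt : (0:ℝ) < 1 - k₂ := by linarith
    by_cases hup : u n = p
    · rw [hup, sub_self, norm_zero]
      exact mul_nonneg (inv_nonneg.mpr hk2lt.le) (norm_nonneg _)
    · have hcon := hScontr (u n) p hup
      rw [hSp] at hcon
      rw [norm_sub_rev] at hcon
      have hr2 : ‖p - S (u n)‖ ≤ k₂ * ‖u n - p‖ :=
        hA2 _ _ (norm_nonneg _) (norm_nonneg _) (Or.inr hcon)
      have htri : ‖u n - p‖ ≤ ‖u n - S (u n)‖ + ‖p - S (u n)‖ := by
        have h5 := norm_add_le (u n - S (u n)) (S (u n) - p)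
        rw [sub_add_sub_cancel] at h5
        rw [norm_sub_rev p (S (u n))]
        exact h5
      have h6 : (1 - k₂) * ‖u n - p‖ ≤ ‖u n - S (u n)‖ := by nlinarith
      calc ‖u n - p‖ = (1-k₂)⁻¹ * ((1-k₂) * ‖u n - p‖) :=
            (inv_mul_cancel_left₀ (ne_of_gt hk2lt) _).symm
        _ ≤ (1-k₂)⁻¹ * ‖u n - S (u n)‖ :=
            mul_le_mul_of_nonneg_left h6 (inv_nonneg.mpr hk2lt.le)
  have hlim : Filter.Tendsto (fun n => ‖u n - p‖) Filter.atTop (nhds 0) :=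
    squeeze_zero (fun n => norm_nonneg _) hbound
      (by simpa using heps.const_mul ((1-k₂)⁻¹))
  have heq : (fun n => ‖T^[n] p - u n‖) = fun n => ‖u n - p‖ := by
    funext n; rw [hfix n, norm_sub_rev]
  rw [heq]
  exact hlim
end

section
/- Let (X, ‖·‖) be a real Banach space and let T : X → X be an enriched Kannan contraction: there exist b ∈ [0,∞) and α ∈ [0, 1/2) such that ‖b(u−v) + Tu − Tv‖ ≤ α(‖u − Tu‖ + ‖v − Tv‖) for all u, v ∈ X with u ≠ v. Then T has a unique fixed point p ∈ X, and there exists λ ∈ (0,1] such that for every u₀ ∈ X the sequence defined by u_{n+1} = (1−λ)u_n + λT u_n (n ≥ 0) converges to p. -/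
open Filter

/-- Picard iterations of a Kannan contraction on a complete normed space
converge to a fixed point. -/
lemma kannan_aux {X : Type*} [NormedAddCommGroup X] [CompleteSpace X]
    (S : X → X) (α : ℝ) (hα0 : 0 ≤ α) (hα : α < 1 / 2)
    (keyS : ∀ u v : X, ‖S u - S v‖ ≤ α * (‖u - S u‖ + ‖v - S v‖))
    (u : ℕ → X) (hu : ∀ n, u (n + 1) = S (u n)) :
    ∃ p : X, S p = p ∧ Tendsto u atTop (nhds p) := by
  have h1α : 0 < 1 - α := by linarith
  set r : ℝ := α / (1 - α) with hr
  have hr0 : 0 ≤ r := div_nonneg hα0 h1α.le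
  have hr1 : r < 1 := by
    rw [hr, div_lt_one h1α]; linarith
  set d : ℕ → ℝ := fun n => ‖u n - u (n + 1)‖ with hd
  have hstep : ∀ n, d (n + 1) ≤ r * d n := by
    intro n
    have h := keyS (u n) (u (n + 1))
    rw [← hu n, ← hu (n + 1)] at h
    have hdn1 : d (n + 1) ≤ α * (d n + d (n + 1)) := h
    have hdn0 : 0 ≤ d n := norm_nonneg _
    rw [hr, div_mul_eq_mul_div, le_div_iff₀ h1α]
    nlinarith
  have hgeo : ∀ n, d n ≤ d 0 * r ^ n := by
    intro n
    induction n with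
    | zero => simp
    | succ n ih =>
      calc d (n + 1) ≤ r * d n := hstep n
        _ ≤ r * (d 0 * r ^ n) := by
            exact mul_le_mul_of_nonneg_left ih hr0
        _ = d 0 * r ^ (n + 1) := by ring
  have hcauchy : CauchySeq u := by
    apply cauchySeq_of_le_geometric r (d 0) hr1
    intro n
    rw [dist_eq_norm]
    exact hgeo n
  obtain ⟨p, hp⟩ := cauchySeq_tendsto_of_complete hcauchy
  refine ⟨p, ?_, hp⟩
  -- show S p = p
  have hd0 : Tendsto d atTop (nhds 0) := by
    apply squeeze_zero (fun n => norm_nonneg _) hgeo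
    have := (tendsto_pow_atTop_nhds_zero_of_lt_one hr0 hr1).const_mul (d 0)
    simpa using this
  have hu1 : Tendsto (fun n => u (n + 1)) atTop (nhds p) :=
    hp.comp (tendsto_add_atTop_nat 1)
  set c : ℝ := ‖p - S p‖ with hc
  have hle : ∀ n, ‖u (n + 1) - S p‖ ≤ α * (d n + c) := by
    intro n
    have := keyS (u n) p
    rw [← hu n] at this
    exact this
  have hL : Tendsto (fun n => ‖u (n + 1) - S p‖) atTop (nhds c) := by
    have := (hu1.sub (tendsto_const_nhds (x := S p))).norm
    simpa using this
  have hR : Tendsto (fun n => α * (d n + c)) atTop (nhds (α * (0 + c))) :=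
    (hd0.add tendsto_const_nhds).const_mul α
  have hcc : c ≤ α * (0 + c) := le_of_tendsto_of_tendsto' hL hR hle
  have hc0 : 0 ≤ c := norm_nonneg _
  have : c = 0 := by nlinarith
  have := norm_sub_eq_zero_iff.mp (hc ▸ this)
  exact this.symm

/-- An enriched Kannan contraction on a real Banach space has a unique fixed point `p`,
and there is `λ ∈ (0,1]` such that every Krasnoselskii iteration converges to `p`. -/
theorem enriched_kannan_contraction_fixedPoint
    {X : Type*} [NormedAddCommGroup X] [NormedSpace ℝ X] [CompleteSpace X]
    (T : X → X) (b α : ℝ) (hb : 0 ≤ b) (hα0 : 0 ≤ α) (hα : α < 1 / 2)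
    (hT : ∀ u v : X, u ≠ v →
      ‖b • (u - v) + T u - T v‖ ≤ α * (‖u - T u‖ + ‖v - T v‖)) :
    ∃ p : X, (T p = p ∧ ∀ q : X, T q = q → q = p) ∧
      ∃ lam : ℝ, 0 < lam ∧ lam ≤ 1 ∧
        ∀ u : ℕ → X, (∀ n : ℕ, u (n + 1) = (1 - lam) • u n + lam • T (u n)) →
          Filter.Tendsto u Filter.atTop (nhds p) := by
  have hb1 : (0:ℝ) < b + 1 := by linarith
  set lam : ℝ := (b + 1)⁻¹ with hlamdef
  have hlam0 : 0 < lam := inv_pos.mpr hb1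
  have hmul : lam * (b + 1) = 1 := inv_mul_cancel₀ hb1.ne'
  have hlam1 : lam ≤ 1 := by nlinarith
  have h1lam : 1 - lam = lam * b := by nlinarith
  set S : X → X := fun u => (1 - lam) • u + lam • T u with hS
  have key1 : ∀ u : X, u - S u = lam • (u - T u) := by
    intro u; simp only [hS]; module
  have key2 : ∀ u v : X, S u - S v = lam • (b • (u - v) + T u - T v) := by
    intro u v; simp only [hS, h1lam]; module
  have keyS : ∀ u v : X, ‖S u - S v‖ ≤ α * (‖u - S u‖ + ‖v - S v‖) := by
    intro u v
    rcases eq_or_ne u v with rfl | huv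
    · simp only [sub_self, norm_zero]
      positivity
    · rw [key2, key1, key1, norm_smul, norm_smul, norm_smul,
        Real.norm_eq_abs, abs_of_pos hlam0]
      have h := hT u v huv
      nlinarith [norm_nonneg (u - T u), norm_nonneg (v - T v)]
  -- fixed point of S iff fixed point of T
  have hfix : ∀ p : X, S p = p ↔ T p = p := by
    intro p
    constructor
    · intro h
      have h2 : p - S p = 0 := by rw [h, sub_self]
      rw [key1] at h2
      have := smul_eq_zero.mp h2
      rcases this with h3 | h3
      · exact absurd h3 hlam0.ne'
      · have := sub_eq_zero.mp h3
        exact this.symm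
    · intro h
      simp only [hS, h]
      module
  -- get a fixed point from the iteration starting at 0
  set w : ℕ → X := fun n => S^[n] 0 with hw
  have hwrec : ∀ n, w (n + 1) = S (w n) := by
    intro n; simp [hw, Function.iterate_succ_apply']
  obtain ⟨p, hSp, _⟩ := kannan_aux S α hα0 hα keyS w hwrec
  refine ⟨p, ⟨(hfix p).mp hSp, ?_⟩, lam, hlam0, hlam1, ?_⟩
  · intro q hq
    by_contra hne
    have := keyS q p
    rw [(hfix q).mpr hq, hSp] at this
    simp only [sub_self, norm_zero, add_zero, mul_zero] at this
    exact hne (norm_sub_eq_zero_iff.mp (le_antisymm this (norm_nonneg _)))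
  · intro u hu
    have hu' : ∀ n, u (n + 1) = S (u n) := fun n => hu n
    obtain ⟨p', hSp', htend⟩ := kannan_aux S α hα0 hα keyS u hu'
    have : p' = p := by
      by_contra hne
      have := keyS p' p
      rw [hSp', hSp] at this
      simp only [sub_self, norm_zero, add_zero, mul_zero] at this
      exact hne (norm_sub_eq_zero_iff.mp (le_antisymm this (norm_nonneg _)))
    exact this ▸ htend
end

section
/- Let (X, ‖·‖) be a real Banach space and let T : X → X be an enriched Reich contraction: there exist b ∈ [0,∞) and α₁, α₂, α₃ ∈ [0,1) with α₁ + α₂ + α₃ < 1 such that ‖b(u−v) + Tu − Tv‖ ≤ α₁(b+1)‖u−v‖ + α₂‖u − Tu‖ + α₃‖v − Tv‖ for all u, v ∈ X with u ≠ v. Then T has a unique fixed point p ∈ X, and there exists λ ∈ (0,1] such that for every u₀ ∈ X the sequence defined by u_{n+1} = (1−λ)u_n + λT u_n (n ≥ 0) converges to p. -/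
/-- An enriched Reich contraction on a real Banach space has a unique fixed point `p`,
and there is `λ ∈ (0,1]` such that every Krasnoselskii iteration converges to `p`. -/
theorem enriched_reich_contraction_fixedPoint
    {X : Type*} [NormedAddCommGroup X] [NormedSpace ℝ X] [CompleteSpace X]
    (T : X → X) (b α₁ α₂ α₃ : ℝ) (hb : 0 ≤ b)
    (hα₁ : 0 ≤ α₁) (hα₁' : α₁ < 1) (hα₂ : 0 ≤ α₂) (hα₂' : α₂ < 1)
    (hα₃ : 0 ≤ α₃) (hα₃' : α₃ < 1) (hsum : α₁ + α₂ + α₃ < 1)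
    (hT : ∀ u v : X, u ≠ v →
      ‖b • (u - v) + T u - T v‖ ≤
        α₁ * ((b + 1) * ‖u - v‖) + α₂ * ‖u - T u‖ + α₃ * ‖v - T v‖) :
    ∃ p : X, (T p = p ∧ ∀ q : X, T q = q → q = p) ∧
      ∃ lam : ℝ, 0 < lam ∧ lam ≤ 1 ∧
        ∀ u : ℕ → X, (∀ n : ℕ, u (n + 1) = (1 - lam) • u n + lam • T (u n)) →
          Filter.Tendsto u Filter.atTop (nhds p) := by
  have hb1 : (0:ℝ) < b + 1 := by linarith
  set lam : ℝ := 1 / (b + 1) with hlam_def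
  have hlam_pos : 0 < lam := by positivity
  have hlam_le : lam ≤ 1 := by
    rw [hlam_def, div_le_one hb1]; linarith
  have hlamb : lam * (b + 1) = 1 := by
    rw [hlam_def]; field_simp
  set S : X → X := fun u => (1 - lam) • u + lam • T u with hS_def
  -- key identities
  have hfix : ∀ u : X, u - S u = lam • (u - T u) := by
    intro u
    show u - ((1 - lam) • u + lam • T u) = lam • (u - T u)
    module
  have hdiff : ∀ u v : X, S u - S v = lam • (b • (u - v) + T u - T v) := by
    intro u v
    show ((1 - lam) • u + lam • T u) - ((1 - lam) • v + lam • T v)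
        = lam • (b • (u - v) + T u - T v)
    have h1 : (1 - lam) = lam * b := by
      have : lam * b = lam * (b + 1) - lam := by ring
      rw [this, hlamb]
    rw [h1]
    module
  -- the key Reich inequality for S (valid for all u, v)
  have key : ∀ u v : X, ‖S u - S v‖ ≤ α₁ * ‖u - v‖ + α₂ * ‖u - S u‖ + α₃ * ‖v - S v‖ := by
    intro u v
    by_cases huv : u = v
    · subst huv
      simp only [sub_self, norm_zero, mul_zero, zero_add]
      positivity
    · rw [hdiff u v, hfix u, hfix v, norm_smul, norm_smul, norm_smul,
        Real.norm_eq_abs, abs_of_pos hlam_pos]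
      have h := hT u v huv
      have h2 : lam * ‖b • (u - v) + T u - T v‖
          ≤ lam * (α₁ * ((b + 1) * ‖u - v‖) + α₂ * ‖u - T u‖ + α₃ * ‖v - T v‖) :=
        mul_le_mul_of_nonneg_left h hlam_pos.le
      calc lam * ‖b • (u - v) + T u - T v‖
          ≤ lam * (α₁ * ((b + 1) * ‖u - v‖) + α₂ * ‖u - T u‖ + α₃ * ‖v - T v‖) := h2
        _ = α₁ * ‖u - v‖ + α₂ * (lam * ‖u - T u‖) + α₃ * (lam * ‖v - T v‖) := by
            linear_combination α₁ * ‖u - v‖ * hlamb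
  -- contraction factor for successive differences
  set c : ℝ := (α₁ + α₃) / (1 - α₂) with hc_def
  have h1mα₂ : 0 < 1 - α₂ := by linarith
  have hc0 : 0 ≤ c := by positivity
  have hc1 : c < 1 := by
    rw [hc_def, div_lt_one h1mα₂]; linarith
  have step : ∀ x : X, ‖S (S x) - S x‖ ≤ c * ‖S x - x‖ := by
    intro x
    have h := key (S x) x
    have h' : ‖S x - S (S x)‖ = ‖S (S x) - S x‖ := norm_sub_rev _ _
    have h'' : ‖x - S x‖ = ‖S x - x‖ := norm_sub_rev _ _
    rw [h', h''] at h
    have : (1 - α₂) * ‖S (S x) - S x‖ ≤ (α₁ + α₃) * ‖S x - x‖ := by linarith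
    rw [hc_def, div_mul_eq_mul_div, le_div_iff₀ h1mα₂]
    linarith
  -- any Picard sequence for S converges to a fixed point of S
  have conv : ∀ u : ℕ → X, (∀ n, u (n + 1) = S (u n)) →
      ∃ p : X, S p = p ∧ Filter.Tendsto u Filter.atTop (nhds p) := by
    intro u hu
    have hd : ∀ n, ‖u (n + 2) - u (n + 1)‖ ≤ c * ‖u (n + 1) - u n‖ := by
      intro n
      have h1 := hu (n + 1)
      have h2 := hu n
      rw [h1, h2]
      exact step (u n)
    have hgeo : ∀ n, ‖u (n + 1) - u n‖ ≤ ‖u 1 - u 0‖ * c ^ n := by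
      intro n
      induction n with
      | zero => simp
      | succ n ih =>
        calc ‖u (n + 2) - u (n + 1)‖ ≤ c * ‖u (n + 1) - u n‖ := hd n
          _ ≤ c * (‖u 1 - u 0‖ * c ^ n) := mul_le_mul_of_nonneg_left ih hc0
          _ = ‖u 1 - u 0‖ * c ^ (n + 1) := by ring
    have hcauchy : CauchySeq u := by
      apply cauchySeq_of_le_geometric c (‖u 1 - u 0‖) hc1
      intro n
      rw [dist_eq_norm, norm_sub_rev]
      exact hgeo n
    obtain ⟨p, hp⟩ := cauchySeq_tendsto_of_complete hcauchy
    refine ⟨p, ?_, hp⟩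
    -- show S p = p
    have hup1 : Filter.Tendsto (fun n => u (n + 1)) Filter.atTop (nhds p) :=
      hp.comp (Filter.tendsto_add_atTop_nat 1)
    have hL : Filter.Tendsto (fun n => ‖u (n + 1) - S p‖) Filter.atTop (nhds ‖p - S p‖) :=
      (hup1.sub tendsto_const_nhds).norm
    have hnp : Filter.Tendsto (fun n => ‖u n - p‖) Filter.atTop (nhds 0) := by
      have := (hp.sub (tendsto_const_nhds (x := p))).norm
      simpa using this
    have hdd : Filter.Tendsto (fun n => ‖u n - u (n + 1)‖) Filter.atTop (nhds 0) := by
      have := (hp.sub hup1).norm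
      simpa using this
    have hR : Filter.Tendsto
        (fun n => α₁ * ‖u n - p‖ + α₂ * ‖u n - u (n + 1)‖ + α₃ * ‖p - S p‖)
        Filter.atTop (nhds (α₁ * 0 + α₂ * 0 + α₃ * ‖p - S p‖)) :=
      (((tendsto_const_nhds.mul hnp).add (tendsto_const_nhds.mul hdd)).add
        tendsto_const_nhds)
    have hle : ‖p - S p‖ ≤ α₁ * 0 + α₂ * 0 + α₃ * ‖p - S p‖ := by
      refine le_of_tendsto_of_tendsto' hL hR ?_
      intro n
      have := key (u n) p
      rw [← hu n] at this
      exact this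
    have : ‖p - S p‖ ≤ α₃ * ‖p - S p‖ := by linarith
    have hz : ‖p - S p‖ ≤ 0 := by nlinarith [norm_nonneg (p - S p)]
    have : p - S p = 0 := by
      have := le_antisymm hz (norm_nonneg _)
      exact norm_eq_zero.mp this
    have : S p = p := by
      have h := sub_eq_zero.mp this
      exact h.symm
    exact this
  -- fixed points of S are fixed points of T and vice versa
  have hSfixT : ∀ p : X, S p = p → T p = p := by
    intro p hp
    have h := hfix p
    rw [hp, sub_self] at h
    have h2 : p - T p = 0 := by
      rcases smul_eq_zero.mp h.symm with h3 | h3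
      · exact absurd h3 (ne_of_gt hlam_pos)
      · exact h3
    have := sub_eq_zero.mp h2
    exact this.symm
  have hTfixS : ∀ q : X, T q = q → S q = q := by
    intro q hq
    show (1 - lam) • q + lam • T q = q
    rw [hq]
    module
  -- construct the fixed point
  obtain ⟨p, hSp, _⟩ := conv (fun n => S^[n] 0) (by
    intro n
    simp [Function.iterate_succ_apply'])
  have hTp : T p = p := hSfixT p hSp
  -- uniqueness
  have huniq : ∀ q : X, T q = q → q = p := by
    intro q hq
    have hSq := hTfixS q hq
    have h := key q p
    rw [hSq, hSp] at h
    simp only [sub_self, norm_zero, mul_zero, add_zero] at h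
    have : (1 - α₁) * ‖q - p‖ ≤ 0 := by linarith
    have hz : ‖q - p‖ ≤ 0 := by nlinarith [norm_nonneg (q - p)]
    have := le_antisymm hz (norm_nonneg _)
    exact sub_eq_zero.mp (norm_eq_zero.mp this)
  refine ⟨p, ⟨hTp, huniq⟩, lam, hlam_pos, hlam_le, ?_⟩
  intro u hu
  obtain ⟨q, hSq, hq⟩ := conv u hu
  have : q = p := huniq q (hSfixT q hSq)
  rwa [this] at hq
end

section
/- Let (X, ‖·‖) be a real Banach space and let T : X → X be an enriched Khan contraction: there exist b ∈ [0,∞) and α ∈ [0,1) such that ‖b(u−v) + Tu − Tv‖ ≤ α·√(‖u − Tu‖·‖v − Tv‖) for all u, v ∈ X with u ≠ v. Then T has a unique fixed point p ∈ X, and there exists λ ∈ (0,1] such that for every u₀ ∈ X the sequence defined by u_{n+1} = (1−λ)u_n + λT u_n (n ≥ 0) converges to p. -/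
/-- An enriched Khan contraction on a real Banach space has a unique fixed point `p`,
and there is `λ ∈ (0,1]` such that every Krasnoselskii iteration converges to `p`. -/
theorem enriched_khan_contraction_fixedPoint
    {X : Type*} [NormedAddCommGroup X] [NormedSpace ℝ X] [CompleteSpace X]
    (T : X → X) (b α : ℝ) (hb : 0 ≤ b) (hα0 : 0 ≤ α) (hα : α < 1)
    (hT : ∀ u v : X, u ≠ v →
      ‖b • (u - v) + T u - T v‖ ≤ α * Real.sqrt (‖u - T u‖ * ‖v - T v‖)) :
    ∃ p : X, (T p = p ∧ ∀ q : X, T q = q → q = p) ∧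
      ∃ lam : ℝ, 0 < lam ∧ lam ≤ 1 ∧
        ∀ u : ℕ → X, (∀ n : ℕ, u (n + 1) = (1 - lam) • u n + lam • T (u n)) →
          Filter.Tendsto u Filter.atTop (nhds p) := by
  have hb1 : (0:ℝ) < b + 1 := by linarith
  set lam : ℝ := 1/(b+1) with hlam_def
  have hlam_pos : 0 < lam := by positivity
  have hlam_le : lam ≤ 1 := by
    rw [hlam_def, div_le_one hb1]; linarith
  have hlam_b : 1 - lam = lam * b := by
    have h5 : lam * (b + 1) = 1 := by
      rw [hlam_def]; exact one_div_mul_cancel hb1.ne'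
    linear_combination -h5
  set Tl : X → X := fun x => (1 - lam) • x + lam • T x with hTl
  have hTl_sub : ∀ x, x - Tl x = lam • (x - T x) := by
    intro x
    simp only [hTl]
    module
  have hTl_diff : ∀ x y, Tl x - Tl y = lam • (b • (x - y) + T x - T y) := by
    intro x y
    simp only [hTl, hlam_b]
    module
  have hα2 : α^2 < 1 := by nlinarith
  have key : ∀ x y : X, ‖Tl x - Tl y‖ ≤ α * Real.sqrt (‖x - Tl x‖ * ‖y - Tl y‖) := by
    intro x y
    rcases eq_or_ne x y with rfl | hxy
    · simp only [sub_self, norm_zero]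
      positivity
    rw [hTl_diff, hTl_sub, hTl_sub, norm_smul, norm_smul, norm_smul,
      Real.norm_of_nonneg hlam_pos.le]
    calc lam * ‖b • (x - y) + T x - T y‖
        ≤ lam * (α * Real.sqrt (‖x - T x‖ * ‖y - T y‖)) :=
          mul_le_mul_of_nonneg_left (hT x y hxy) hlam_pos.le
      _ = α * Real.sqrt ((lam * ‖x - T x‖) * (lam * ‖y - T y‖)) := by
          rw [show (lam * ‖x - T x‖) * (lam * ‖y - T y‖)
              = lam^2 * (‖x - T x‖ * ‖y - T y‖) by ring,
            Real.sqrt_mul (sq_nonneg lam) (‖x - T x‖ * ‖y - T y‖), Real.sqrt_sq hlam_pos.le]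
          ring
  -- general convergence of any Krasnoselskii iteration
  have conv : ∀ u : ℕ → X, (∀ n, u (n+1) = Tl (u n)) →
      ∃ q, Filter.Tendsto u Filter.atTop (nhds q) ∧ T q = q := by
    intro u hu
    set d : ℕ → ℝ := fun n => ‖u n - u (n+1)‖ with hd
    have hd_nonneg : ∀ n, 0 ≤ d n := fun n => norm_nonneg _
    have hstep : ∀ n, d (n+1) ≤ α^2 * d n := by
      intro n
      rcases eq_or_ne (u n) (u (n+1)) with h | h
      · have h2 : u (n+2) = u (n+1) := by
          rw [hu (n+1), ← h, ← hu n]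
          exact h.symm
        have hd1 : d (n+1) = 0 := by
          show ‖u (n+1) - u (n+2)‖ = 0
          rw [h2, sub_self, norm_zero]
        rw [hd1]
        have := hd_nonneg n
        positivity
      · have h1 : d (n+1) ≤ α * Real.sqrt (d n * d (n+1)) := by
          have := key (u n) (u (n+1))
          simpa [hd, hu n, hu (n+1)] using this
        rcases eq_or_lt_of_le (hd_nonneg (n+1)) with h0 | h0
        · rw [← h0]; have := hd_nonneg n; positivity
        · have h2 : d (n+1) * d (n+1) ≤ α^2 * (d n * d (n+1)) := by
            have hs : Real.sqrt (d n * d (n+1)) ^ 2 = d n * d (n+1) :=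
              Real.sq_sqrt (by positivity)
            nlinarith [Real.sqrt_nonneg (d n * d (n+1)), h1]
          nlinarith
    have hgeo : ∀ n, d n ≤ (α^2)^n * d 0 := by
      intro n
      induction n with
      | zero => simp
      | succ k ih =>
        calc d (k+1) ≤ α^2 * d k := hstep k
          _ ≤ α^2 * ((α^2)^k * d 0) := by
              apply mul_le_mul_of_nonneg_left ih (by positivity)
          _ = (α^2)^(k+1) * d 0 := by ring
    have hcauchy : CauchySeq u := by
      apply cauchySeq_of_le_geometric (α^2) (d 0) hα2
      intro n
      rw [dist_eq_norm]
      calc ‖u n - u (n+1)‖ = d n := rfl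
        _ ≤ (α^2)^n * d 0 := hgeo n
        _ = d 0 * (α^2)^n := by ring
    obtain ⟨q, hq⟩ := cauchySeq_tendsto_of_complete hcauchy
    have hd_tendsto : Filter.Tendsto d Filter.atTop (nhds 0) := by
      apply squeeze_zero hd_nonneg hgeo
      have h0 : Filter.Tendsto (fun n : ℕ => (α^2)^n) Filter.atTop (nhds 0) :=
        tendsto_pow_atTop_nhds_zero_of_lt_one (by positivity) hα2
      simpa using h0.mul_const (d 0)
    -- show Tl q = q
    have hbnd : ∀ n, ‖u (n+1) - Tl q‖ ≤ α * Real.sqrt (d n * ‖q - Tl q‖) := by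
      intro n
      have := key (u n) q
      calc ‖u (n+1) - Tl q‖ = ‖Tl (u n) - Tl q‖ := by rw [hu n]
        _ ≤ α * Real.sqrt (‖u n - Tl (u n)‖ * ‖q - Tl q‖) := key (u n) q
        _ = α * Real.sqrt (d n * ‖q - Tl q‖) := by rw [show ‖u n - Tl (u n)‖ = d n by rw [← hu n]]
    have hrhs : Filter.Tendsto (fun n => α * Real.sqrt (d n * ‖q - Tl q‖))
        Filter.atTop (nhds 0) := by
      have h1 : Filter.Tendsto (fun n => d n * ‖q - Tl q‖) Filter.atTop (nhds 0) := by
        simpa using hd_tendsto.mul_const ‖q - Tl q‖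
      have h2 : Filter.Tendsto (fun n => Real.sqrt (d n * ‖q - Tl q‖))
          Filter.atTop (nhds 0) := by
        simpa using h1.sqrt
      simpa using h2.const_mul α
    have htl : Filter.Tendsto (fun n => u (n+1)) Filter.atTop (nhds (Tl q)) := by
      rw [tendsto_iff_norm_sub_tendsto_zero]
      exact squeeze_zero (fun n => norm_nonneg _) hbnd hrhs
    have hq1 : Filter.Tendsto (fun n => u (n+1)) Filter.atTop (nhds q) :=
      hq.comp (Filter.tendsto_add_atTop_nat 1)
    have hfix : Tl q = q := tendsto_nhds_unique htl hq1
    have hTq : T q = q := by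
      have h3 : lam • (T q - q) = 0 := by
        have h4 : lam • (T q - q) = ((1 - lam) • q + lam • T q) - q := by module
        rw [h4]
        change Tl q - q = 0
        rw [hfix, sub_self]
      rcases smul_eq_zero.mp h3 with h | h
      · exact absurd h (ne_of_gt hlam_pos)
      · exact sub_eq_zero.mp h
    exact ⟨q, hq, hTq⟩
  -- existence of a fixed point
  obtain ⟨p, hp_t, hp_fix⟩ := conv (fun n => Tl^[n] 0)
    (fun n => Function.iterate_succ_apply' Tl n 0)
  -- uniqueness
  have huniq : ∀ q : X, T q = q → q = p := by
    intro q hq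
    by_contra hne
    have h0 := hT q p hne
    rw [hq, hp_fix] at h0
    simp only [sub_self, norm_zero, mul_zero, Real.sqrt_zero] at h0
    have h1 : b • (q - p) + q - p = 0 := by
      have := norm_le_zero_iff.mp h0
      exact this
    have h2 : (b + 1) • (q - p) = 0 := by
      rw [add_smul, one_smul, ← add_sub_assoc]
      exact h1
    rcases smul_eq_zero.mp h2 with h | h
    · exact absurd h (ne_of_gt hb1)
    · exact hne (sub_eq_zero.mp h)
  refine ⟨p, ⟨hp_fix, huniq⟩, lam, hlam_pos, hlam_le, ?_⟩
  intro u hu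
  obtain ⟨q, hq_t, hq_fix⟩ := conv u hu
  rwa [huniq q hq_fix] at hq_t
end

section
/- Let (X, ‖·‖) be a real Banach space and let T : X → X be an enriched Chatterjea contraction: there exist b ∈ [0,∞) and α ∈ [0, 1/2) such that ‖b(u−v) + Tu − Tv‖ ≤ α(‖(b+1)(u−v) + v − Tv‖ + ‖(b+1)(v−u) + u − Tu‖) for all u, v ∈ X with u ≠ v. Then T has a unique fixed point p ∈ X, and there exists λ ∈ (0,1] such that for every u₀ ∈ X the sequence defined by u_{n+1} = (1−λ)u_n + λT u_n (n ≥ 0) converges to p. -/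
set_option maxHeartbeats 1600000 in
/-- An enriched Chatterjea contraction on a real Banach space has a unique fixed point `p`,
and there is `λ ∈ (0,1]` such that every Krasnoselskii iteration converges to `p`. -/
theorem enriched_chatterjea_contraction_fixedPoint
    {X : Type*} [NormedAddCommGroup X] [NormedSpace ℝ X] [CompleteSpace X]
    (T : X → X) (b α : ℝ) (hb : 0 ≤ b) (hα0 : 0 ≤ α) (hα : α < 1 / 2)
    (hT : ∀ u v : X, u ≠ v →
      ‖b • (u - v) + T u - T v‖ ≤
        α * (‖(b + 1) • (u - v) + v - T v‖ + ‖(b + 1) • (v - u) + u - T u‖)) :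
    ∃ p : X, (T p = p ∧ ∀ q : X, T q = q → q = p) ∧
      ∃ lam : ℝ, 0 < lam ∧ lam ≤ 1 ∧
        ∀ u : ℕ → X, (∀ n : ℕ, u (n + 1) = (1 - lam) • u n + lam • T (u n)) →
          Filter.Tendsto u Filter.atTop (nhds p) := by
  have hb1 : (0:ℝ) < b + 1 := by linarith
  set lam : ℝ := 1 / (b + 1) with hlamdef
  have hlam0 : 0 < lam := by positivity
  have hlam1 : lam ≤ 1 := by
    rw [hlamdef, div_le_one hb1]; linarith
  have hlamb : lam * (b + 1) = 1 := by
    rw [hlamdef]; field_simp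
  have hne : (1 + b) ≠ 0 := by positivity
  have hinv : (b + 1) * (b + 1)⁻¹ = 1 := mul_inv_cancel₀ (ne_of_gt hb1)
  set S : X → X := fun u => (1 - lam) • u + lam • T u with hSdef
  -- S is a Chatterjea contraction
  have key : ∀ u v : X, ‖S u - S v‖ ≤ α * (‖u - S v‖ + ‖v - S u‖) := by
    intro u v
    by_cases huv : u = v
    · subst huv; simp only [sub_self, norm_zero]
      positivity
    · have h1 : S u - S v = lam • (b • (u - v) + T u - T v) := by
        simp only [hSdef]
        match_scalars <;>
          first
          | linear_combination hinv
          | linear_combination -hinv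
          | ring
      have h2 : u - S v = lam • ((b + 1) • (u - v) + v - T v) := by
        simp only [hSdef]
        match_scalars <;>
          first
          | linear_combination hinv
          | linear_combination -hinv
          | ring
      have h3 : v - S u = lam • ((b + 1) • (v - u) + u - T u) := by
        simp only [hSdef]
        match_scalars <;>
          first
          | linear_combination hinv
          | linear_combination -hinv
          | ring
      rw [h1, h2, h3, norm_smul, norm_smul, norm_smul,
        Real.norm_eq_abs, abs_of_pos hlam0]
      have := hT u v huv
      nlinarith [norm_nonneg (b • (u - v) + T u - T v),
        norm_nonneg ((b + 1) • (u - v) + v - T v),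
        norm_nonneg ((b + 1) • (v - u) + u - T u)]
  set r : ℝ := α / (1 - α) with hrdef
  have hαlt1 : α < 1 := by linarith
  have h1α : 0 < 1 - α := by linarith
  have hr0 : 0 ≤ r := by positivity
  have hr1 : r < 1 := by
    rw [hrdef, div_lt_one h1α]; linarith
  -- contraction step for the distance to a point mapped forward
  have step : ∀ x : X, ‖S x - S (S x)‖ ≤ r * ‖x - S x‖ := by
    intro x
    have h := key x (S x)
    have htri : ‖x - S (S x)‖ ≤ ‖x - S x‖ + ‖S x - S (S x)‖ := norm_sub_le_norm_sub_add_norm_sub _ _ _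
    rw [hrdef, div_mul_eq_mul_div, le_div_iff₀ h1α]
    simp only [sub_self, norm_zero, add_zero] at h
    nlinarith [norm_nonneg (S x - S (S x)), norm_nonneg (x - S x)]
  -- the orbit of 0 is Cauchy
  set x : ℕ → X := fun n => S^[n] 0 with hxdef
  have hxsucc : ∀ n, x (n + 1) = S (x n) := by
    intro n; simp [hxdef, Function.iterate_succ_apply']
  have hgeo : ∀ n, dist (x n) (x (n + 1)) ≤ dist (x 0) (x 1) * r ^ n := by
    intro n
    induction n with
    | zero => simp
    | succ n ih =>
        calc dist (x (n+1)) (x (n+1+1)) = ‖x (n+1) - x (n+1+1)‖ := by rw [dist_eq_norm]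
          _ = ‖S (x n) - S (S (x n))‖ := by rw [hxsucc n, hxsucc (n+1), hxsucc n]
          _ ≤ r * ‖x n - S (x n)‖ := step (x n)
          _ = r * dist (x n) (x (n+1)) := by rw [hxsucc n, dist_eq_norm]
          _ ≤ r * (dist (x 0) (x 1) * r ^ n) := by
              exact mul_le_mul_of_nonneg_left ih hr0
          _ = dist (x 0) (x 1) * r ^ (n+1) := by ring
  have hcauchy : CauchySeq x := cauchySeq_of_le_geometric r (dist (x 0) (x 1)) hr1 hgeo
  obtain ⟨p, hp⟩ := cauchySeq_tendsto_of_complete hcauchy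
  -- p is a fixed point of S
  have hx1 : Filter.Tendsto (fun n => x (n + 1)) Filter.atTop (nhds p) :=
    hp.comp (Filter.tendsto_add_atTop_nat 1)
  have hSp : S p = p := by
    have hf : Filter.Tendsto (fun n => ‖x (n + 1) - S p‖) Filter.atTop (nhds ‖p - S p‖) :=
      (hx1.sub tendsto_const_nhds).norm
    have hg : Filter.Tendsto (fun n => α * (‖x n - S p‖ + ‖p - x (n + 1)‖))
        Filter.atTop (nhds (α * (‖p - S p‖ + ‖p - p‖))) :=
      (((hp.sub tendsto_const_nhds).norm.add
        ((tendsto_const_nhds.sub hx1).norm)).const_mul α)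
    have hle : ‖p - S p‖ ≤ α * (‖p - S p‖ + ‖p - p‖) := by
      refine le_of_tendsto_of_tendsto' hf hg (fun n => ?_)
      rw [hxsucc n]
      exact key (x n) p
    simp only [sub_self, norm_zero, add_zero] at hle
    have : ‖p - S p‖ = 0 := by nlinarith [norm_nonneg (p - S p)]
    have := sub_eq_zero.mp (norm_eq_zero.mp this)
    exact this.symm
  have hTp : T p = p := by
    have h : lam • (T p - p) = 0 := by
      have : S p - p = lam • (T p - p) := by
        simp only [hSdef]; module
      rw [← this, hSp, sub_self]
    rcases smul_eq_zero.mp h with h | h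
    · exact absurd h (ne_of_gt hlam0)
    · exact sub_eq_zero.mp h
  refine ⟨p, ⟨hTp, ?_⟩, lam, hlam0, hlam1, ?_⟩
  · -- uniqueness
    intro q hq
    have hSq : S q = q := by
      simp only [hSdef, hq]; module
    have h := key q p
    rw [hSq, hSp, norm_sub_rev p q] at h
    have : ‖q - p‖ = 0 := by nlinarith [norm_nonneg (q - p)]
    exact sub_eq_zero.mp (norm_eq_zero.mp this)
  · -- convergence of every Krasnoselskii iteration
    intro u hu
    have husucc : ∀ n, u (n + 1) = S (u n) := fun n => hu n
    have hdist : ∀ n, dist (u n) p ≤ dist (u 0) p * r ^ n := by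
      intro n
      induction n with
      | zero => simp
      | succ n ih =>
          have h := key (u n) p
          rw [hSp] at h
          have htri : ‖u n - S (u n)‖ ≤ ‖u n - p‖ + ‖p - S (u n)‖ :=
            norm_sub_le_norm_sub_add_norm_sub _ _ _
          have hstep : ‖S (u n) - p‖ ≤ r * ‖u n - p‖ := by
            rw [hrdef, div_mul_eq_mul_div, le_div_iff₀ h1α]
            rw [norm_sub_rev p (S (u n))] at h
            nlinarith [norm_nonneg (S (u n) - p), norm_nonneg (u n - p)]
          calc dist (u (n+1)) p = ‖S (u n) - p‖ := by rw [husucc n, dist_eq_norm]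
            _ ≤ r * ‖u n - p‖ := hstep
            _ = r * dist (u n) p := by rw [dist_eq_norm]
            _ ≤ r * (dist (u 0) p * r ^ n) := mul_le_mul_of_nonneg_left ih hr0
            _ = dist (u 0) p * r ^ (n+1) := by ring
    rw [tendsto_iff_dist_tendsto_zero]
    have hlim : Filter.Tendsto (fun n => dist (u 0) p * r ^ n) Filter.atTop (nhds 0) := by
      have := tendsto_pow_atTop_nhds_zero_of_lt_one hr0 hr1
      simpa using this.const_mul (dist (u 0) p)
    exact squeeze_zero (fun n => dist_nonneg) hdist hlim
end

section
/- Let (X, ‖·‖) be a real Banach space and let T : X → X satisfy Khan's contraction condition: there exists α ∈ [0,1) such that ‖Tu − Tv‖ ≤ α·√(‖u − Tu‖·‖v − Tv‖) for all u, v ∈ X with u ≠ v. Then T has a unique fixed point p ∈ X, and for every u₀ ∈ X the Picard iteration u_{n+1} = T u_n converges to p. -/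
/-- Khan's fixed point theorem: a self-map of a real Banach space satisfying
`‖Tu − Tv‖ ≤ α √(‖u − Tu‖ ‖v − Tv‖)` for `u ≠ v`, with `α ∈ [0,1)`, has a unique
fixed point, to which every Picard iteration converges. -/
theorem khan_contraction_fixedPoint
    {X : Type*} [NormedAddCommGroup X] [NormedSpace ℝ X] [CompleteSpace X]
    (T : X → X) (α : ℝ) (hα0 : 0 ≤ α) (hα : α < 1)
    (hT : ∀ u v : X, u ≠ v →
      ‖T u - T v‖ ≤ α * Real.sqrt (‖u - T u‖ * ‖v - T v‖)) :
    ∃ p : X, (T p = p ∧ ∀ q : X, T q = q → q = p) ∧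
      ∀ u₀ : X, Filter.Tendsto (fun n => T^[n] u₀) Filter.atTop (nhds p) := by
  have uniq : ∀ p q : X, T p = p → T q = q → p = q := by
    intro p q hp hq
    by_contra h
    have h2 := hT p q h
    rw [hp, hq, sub_self, sub_self, norm_zero, mul_zero, Real.sqrt_zero, mul_zero] at h2
    have : p - q ≠ 0 := sub_ne_zero.mpr h
    have := norm_pos_iff.mpr this
    linarith
  have key : ∀ u₀ : X, ∃ p : X, T p = p ∧
      Filter.Tendsto (fun n => T^[n] u₀) Filter.atTop (nhds p) := by
    intro u₀
    set u : ℕ → X := fun n => T^[n] u₀ with hu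
    have hu1 : ∀ n, u (n+1) = T (u n) := fun n => Function.iterate_succ_apply' T n u₀
    set d : ℕ → ℝ := fun n => ‖u n - u (n+1)‖ with hd
    have hd0 : ∀ n, (0:ℝ) ≤ d n := fun n => norm_nonneg _
    have hstep : ∀ n, d (n+1) ≤ α^2 * d n := by
      intro n
      by_cases h : u n = u (n+1)
      · have h2 : u (n+2) = u (n+1) := by
          rw [hu1 (n+1), ← h, ← hu1 n]; exact h.symm
        have : d (n+1) = 0 := by
          simp only [hd, h2, sub_self, norm_zero]
        rw [this]
        positivity
      · have h2 := hT (u n) (u (n+1)) h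
        rw [← hu1 n, ← hu1 (n+1)] at h2
        by_cases h3 : d (n+1) = 0
        · rw [h3]; positivity
        · have hpos : 0 < d (n+1) := lt_of_le_of_ne (hd0 _) (Ne.symm h3)
          have hsqr : (α * Real.sqrt (d n * d (n+1)))^2 = α^2 * (d n * d (n+1)) := by
            rw [mul_pow, Real.sq_sqrt (by positivity)]
          have hsq : d (n+1) ^ 2 ≤ α^2 * (d n * d (n+1)) := by
            nlinarith [mul_nonneg hα0 (Real.sqrt_nonneg (d n * d (n+1))), hd0 (n+1)]
          nlinarith
    have hgeo : ∀ n, d n ≤ d 0 * (α^2)^n := by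
      intro n
      induction n with
      | zero => simp
      | succ k ih =>
        have := hstep k
        have hα2 : (0:ℝ) ≤ α^2 := by positivity
        calc d (k+1) ≤ α^2 * d k := hstep k
          _ ≤ α^2 * (d 0 * (α^2)^k) := by nlinarith
          _ = d 0 * (α^2)^(k+1) := by ring
    have hα2lt : α^2 < 1 := by nlinarith
    have hcauchy : CauchySeq u := by
      apply cauchySeq_of_le_geometric (α^2) (d 0) hα2lt
      intro n
      rw [dist_eq_norm]
      exact hgeo n
    obtain ⟨p, hp⟩ := cauchySeq_tendsto_of_complete hcauchy
    have hdlim : Filter.Tendsto d Filter.atTop (nhds 0) := by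
      have hlim : Filter.Tendsto (fun n => d 0 * (α^2)^n) Filter.atTop (nhds 0) := by
        have := tendsto_pow_atTop_nhds_zero_of_lt_one (by positivity : (0:ℝ) ≤ α^2) hα2lt
        simpa using this.const_mul (d 0)
      exact squeeze_zero hd0 hgeo hlim
    have hb : ∀ n, ‖u (n+1) - T p‖ ≤ α * Real.sqrt (d n * ‖p - T p‖) := by
      intro n
      by_cases h : u n = p
      · rw [hu1 n, h, sub_self, norm_zero]
        positivity
      · have h2 := hT (u n) p h
        rw [← hu1 n] at h2
        exact h2
    have hrhs : Filter.Tendsto (fun n => α * Real.sqrt (d n * ‖p - T p‖))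
        Filter.atTop (nhds 0) := by
      have h1 : Filter.Tendsto (fun n => d n * ‖p - T p‖) Filter.atTop (nhds 0) := by
        simpa using hdlim.mul_const ‖p - T p‖
      have h2 : Filter.Tendsto (fun n => Real.sqrt (d n * ‖p - T p‖))
          Filter.atTop (nhds 0) := by
        have := (Real.continuous_sqrt.tendsto 0).comp h1
        simpa only [Function.comp_def, Real.sqrt_zero] using this
      simpa using h2.const_mul α
    have hnorm : Filter.Tendsto (fun n => ‖u (n+1) - T p‖) Filter.atTop (nhds 0) :=
      squeeze_zero (fun n => norm_nonneg _) hb hrhs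
    have hTp : Filter.Tendsto (fun n => u (n+1)) Filter.atTop (nhds (T p)) :=
      tendsto_iff_norm_sub_tendsto_zero.mpr hnorm
    have hpshift : Filter.Tendsto (fun n => u (n+1)) Filter.atTop (nhds p) :=
      hp.comp (Filter.tendsto_add_atTop_nat 1)
    have hfix : T p = p := tendsto_nhds_unique hTp hpshift
    exact ⟨p, hfix, hp⟩
  obtain ⟨p, hp, _⟩ := key 0
  refine ⟨p, ⟨hp, fun q hq => uniq q p hq hp⟩, fun u₀ => ?_⟩
  obtain ⟨q, hq, hconv⟩ := key u₀
  rwa [uniq q p hq hp] at hconv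
end

section
/- Let (X, ‖·‖) be a real Banach space and let T : X → X be an enriched Chatterjea contraction: there exist b ∈ [0,∞) and α ∈ [0, 1/2) such that ‖b(u−v) + Tu − Tv‖ ≤ α(‖(b+1)(u−v) + v − Tv‖ + ‖(b+1)(v−u) + u − Tu‖) for all u, v ∈ X with u ≠ v. Then the fixed point problem for T is well-posed: T has a unique fixed point p ∈ X, and for every sequence (u_n) in X with ‖u_n − T u_n‖ → 0 as n → ∞, one has ‖u_n − p‖ → 0 as n → ∞. -/
/-!
With `λ = 1 / (b + 1)`, the Krasnoselskij averaged map `S x = x + λ • (T x - x)` has the same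
fixed points as `T`, displacement `‖x - S x‖ = λ ‖x - T x‖`, and satisfies the metric
Chatterjea condition `d(S x, S y) ≤ α (d(x, S y) + d(y, S x))`. For a Chatterjea map with
`α < 1/2` the displacement along an orbit decays geometrically with ratio `α / (1 - α)`, so the
orbit converges to a fixed point, and the triangle inequality gives
`(1 - 2α) d(x, p) ≤ (1 + α) d(x, S x)` for any fixed point `p`, which yields both uniqueness
and well-posedness.
-/

open Filter Topology Function

def ChatterjeaWith {M : Type*} [PseudoMetricSpace M] (α : ℝ) (S : M → M) : Prop :=
  ∀ x y, dist (S x) (S y) ≤ α * (dist x (S y) + dist y (S x))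

namespace ChatterjeaWith

section PseudoMetric

variable {M : Type*} [PseudoMetricSpace M] {α : ℝ} {S : M → M}

theorem mul_dist_le_of_isFixedPt (hS : ChatterjeaWith α S) (hα0 : 0 ≤ α) {p : M}
    (hp : IsFixedPt S p) (x : M) :
    (1 - 2 * α) * dist x p ≤ (1 + α) * dist x (S x) := by
  have hSx : dist (S x) p ≤ α * (dist x p + dist p (S x)) := by
    simpa only [hp.eq] using hS x p
  have h₁ := dist_triangle x (S x) p
  have h₂ : dist p (S x) ≤ dist x p + dist x (S x) := by
    simpa only [dist_comm p x] using dist_triangle p x (S x)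
  nlinarith [mul_le_mul_of_nonneg_left h₂ hα0]

theorem mul_dist_map_map_le (hS : ChatterjeaWith α S) (hα0 : 0 ≤ α) (x : M) :
    (1 - α) * dist (S x) (S (S x)) ≤ α * dist x (S x) := by
  have h := hS x (S x)
  rw [dist_self, add_zero] at h
  nlinarith [mul_le_mul_of_nonneg_left (dist_triangle x (S x) (S (S x))) hα0]

theorem dist_iterate_succ_le_geometric (hS : ChatterjeaWith α S) (hα0 : 0 ≤ α) (hα1 : α < 1)
    (x : M) (n : ℕ) :
    dist (S^[n] x) (S^[n + 1] x) ≤ dist x (S x) * (α / (1 - α)) ^ n := by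
  induction n with
  | zero => simp
  | succ n ih =>
    have hstep :
        dist (S^[n + 1] x) (S^[n + 2] x) ≤ α / (1 - α) * dist (S^[n] x) (S^[n + 1] x) := by
      rw [div_mul_eq_mul_div, le_div_iff₀ (by linarith), mul_comm]
      simpa only [iterate_succ_apply'] using hS.mul_dist_map_map_le hα0 (S^[n] x)
    calc dist (S^[n + 1] x) (S^[n + 2] x)
        ≤ α / (1 - α) * (dist x (S x) * (α / (1 - α)) ^ n) :=
          hstep.trans (mul_le_mul_of_nonneg_left ih (div_nonneg hα0 (by linarith)))
      _ = dist x (S x) * (α / (1 - α)) ^ (n + 1) := by ring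

end PseudoMetric

section Metric

variable {M : Type*} [MetricSpace M] {α : ℝ} {S : M → M}

/-- A Chatterjea map need not be continuous; the contraction inequality itself passes to the
limit. -/
theorem isFixedPt_of_tendsto (hS : ChatterjeaWith α S) (hα1 : α < 1) {u : ℕ → M} {p : M}
    (hu : Tendsto u atTop (𝓝 p)) (hSu : Tendsto (S ∘ u) atTop (𝓝 p)) : IsFixedPt S p := by
  have hbound (n : ℕ) :
      dist p (S p) ≤ dist p (S (u n)) + α * (dist (u n) (S p) + dist p (S (u n))) :=
    (dist_triangle p (S (u n)) (S p)).trans (add_le_add le_rfl (hS (u n) p))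
  have hlim : Tendsto (fun n => dist p (S (u n)) + α * (dist (u n) (S p) + dist p (S (u n))))
      atTop (𝓝 (dist p p + α * (dist p (S p) + dist p p))) :=
    (tendsto_const_nhds.dist hSu).add
      (((hu.dist tendsto_const_nhds).add (tendsto_const_nhds.dist hSu)).const_mul α)
  have hle : dist p (S p) ≤ α * dist p (S p) := by
    simpa only [dist_self, add_zero, zero_add] using
      le_of_tendsto_of_tendsto' tendsto_const_nhds hlim hbound
  have hzero : dist p (S p) ≤ 0 := by nlinarith [dist_nonneg (x := p) (y := S p)]
  exact (dist_le_zero.mp hzero).symm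

theorem eq_of_isFixedPt (hS : ChatterjeaWith α S) (hα : α < 1 / 2) {x y : M}
    (hx : IsFixedPt S x) (hy : IsFixedPt S y) : x = y := by
  have h := hS x y
  rw [hx.eq, hy.eq, dist_comm y x] at h
  exact dist_le_zero.mp (by nlinarith [dist_nonneg (x := x) (y := y)])

theorem exists_isFixedPt [CompleteSpace M] (hS : ChatterjeaWith α S) (hα0 : 0 ≤ α)
    (hα : α < 1 / 2) (x : M) : ∃ p, IsFixedPt S p := by
  have hratio : α / (1 - α) < 1 := by rw [div_lt_one (by linarith)]; linarith
  obtain ⟨p, hp⟩ := cauchySeq_tendsto_of_complete <|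
    cauchySeq_of_le_geometric _ _ hratio (hS.dist_iterate_succ_le_geometric hα0 (by linarith) x)
  refine ⟨p, hS.isFixedPt_of_tendsto (by linarith) hp ?_⟩
  simpa only [comp_def, ← iterate_succ_apply' S] using hp.comp (tendsto_add_atTop_nat 1)

theorem tendsto_dist_of_isFixedPt (hS : ChatterjeaWith α S) (hα0 : 0 ≤ α) (hα : α < 1 / 2)
    {p : M} (hp : IsFixedPt S p) {u : ℕ → M}
    (hu : Tendsto (fun n => dist (u n) (S (u n))) atTop (𝓝 0)) :
    Tendsto (fun n => dist (u n) p) atTop (𝓝 0) := by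
  have h2α : 0 < 1 - 2 * α := by linarith
  refine squeeze_zero (fun _ => dist_nonneg) (fun n => ?_)
    (by simpa only [mul_zero] using hu.const_mul ((1 + α) / (1 - 2 * α)))
  rw [div_mul_eq_mul_div, le_div_iff₀ h2α, mul_comm]
  exact hS.mul_dist_le_of_isFixedPt hα0 hp (u n)

end Metric

end ChatterjeaWith

section Enriched

variable {X : Type*} [NormedAddCommGroup X] [NormedSpace ℝ X]

def EnrichedChatterjeaWith (b α : ℝ) (T : X → X) : Prop :=
  ∀ u v : X, u ≠ v →
    ‖b • (u - v) + T u - T v‖ ≤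
      α * (‖(b + 1) • (u - v) + v - T v‖ + ‖(b + 1) • (v - u) + u - T u‖)

def krasnoselskij (l : ℝ) (T : X → X) (x : X) : X :=
  x + l • (T x - x)

theorem isFixedPt_krasnoselskij_iff {l : ℝ} (hl : l ≠ 0) {T : X → X} {x : X} :
    IsFixedPt (krasnoselskij l T) x ↔ IsFixedPt T x := by
  simp only [IsFixedPt, krasnoselskij, add_eq_left, smul_eq_zero, hl, false_or, sub_eq_zero]

theorem dist_krasnoselskij (l : ℝ) (T : X → X) (x : X) :
    dist x (krasnoselskij l T x) = |l| * dist x (T x) := by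
  rw [dist_eq_norm, dist_eq_norm, krasnoselskij, sub_add_eq_sub_sub, sub_self, zero_sub, norm_neg,
    norm_smul, Real.norm_eq_abs, norm_sub_rev]

theorem krasnoselskij_sub_krasnoselskij {b : ℝ} (hb : b + 1 ≠ 0) (T : X → X) (u v : X) :
    krasnoselskij (b + 1)⁻¹ T u - krasnoselskij (b + 1)⁻¹ T v =
      (b + 1)⁻¹ • (b • (u - v) + T u - T v) := by
  simp only [krasnoselskij]
  match_scalars <;> field

theorem sub_krasnoselskij {b : ℝ} (hb : b + 1 ≠ 0) (T : X → X) (u v : X) :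
    u - krasnoselskij (b + 1)⁻¹ T v = (b + 1)⁻¹ • ((b + 1) • (u - v) + v - T v) := by
  simp only [krasnoselskij]
  match_scalars <;> field

theorem chatterjeaWith_krasnoselskij {b α : ℝ} {T : X → X} (hb : 0 ≤ b) (hα0 : 0 ≤ α)
    (hT : EnrichedChatterjeaWith b α T) : ChatterjeaWith α (krasnoselskij (b + 1)⁻¹ T) := by
  intro u v
  rcases eq_or_ne u v with rfl | huv
  · rw [dist_self]; positivity
  have hb1 : b + 1 ≠ 0 := by positivity
  simp only [dist_eq_norm, krasnoselskij_sub_krasnoselskij hb1, sub_krasnoselskij hb1, norm_smul,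
    ← mul_add, mul_left_comm α]
  exact mul_le_mul_of_nonneg_left (hT u v huv) (norm_nonneg _)

end Enriched

/-- The fixed point problem of an enriched Chatterjea contraction on a real Banach
space is well-posed. -/
theorem enriched_chatterjea_contraction_wellPosed
    {X : Type*} [NormedAddCommGroup X] [NormedSpace ℝ X] [CompleteSpace X]
    (T : X → X) (b α : ℝ) (hb : 0 ≤ b) (hα0 : 0 ≤ α) (hα : α < 1 / 2)
    (hT : ∀ u v : X, u ≠ v →
      ‖b • (u - v) + T u - T v‖ ≤
        α * (‖(b + 1) • (u - v) + v - T v‖ + ‖(b + 1) • (v - u) + u - T u‖)) :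
    ∃ p : X, (T p = p ∧ ∀ q : X, T q = q → q = p) ∧
      ∀ u : ℕ → X,
        Filter.Tendsto (fun n => ‖u n - T (u n)‖) Filter.atTop (nhds 0) →
        Filter.Tendsto (fun n => ‖u n - p‖) Filter.atTop (nhds 0) := by
  have hl : (b + 1)⁻¹ ≠ 0 := inv_ne_zero (by positivity)
  have hS := chatterjeaWith_krasnoselskij hb hα0 hT
  obtain ⟨p, hp⟩ := hS.exists_isFixedPt hα0 hα 0
  refine ⟨p, ⟨(isFixedPt_krasnoselskij_iff hl).mp hp, fun q hq => ?_⟩, fun u hu => ?_⟩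
  · exact hS.eq_of_isFixedPt hα ((isFixedPt_krasnoselskij_iff hl).mpr hq) hp
  · have hdist (n : ℕ) :
        dist (u n) (krasnoselskij (b + 1)⁻¹ T (u n)) = |(b + 1)⁻¹| * ‖u n - T (u n)‖ := by
      rw [dist_krasnoselskij, dist_eq_norm]
    have hSu :
        Tendsto (fun n => dist (u n) (krasnoselskij (b + 1)⁻¹ T (u n))) atTop (𝓝 0) := by
      simpa only [hdist, mul_zero] using hu.const_mul |(b + 1)⁻¹|
    simpa only [dist_eq_norm] using hS.tendsto_dist_of_isFixedPt hα0 hα hp hSu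
end
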